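/- arXiv:1510.00644 — 3 statements merged into one kernel-verified Lean document; each statement's English description precedes it below -/
import Mathlib

section
/- Let W be a shuffle closed set of colored words, meaning: whenever w ∈ W, any word obtained from w by swapping a barred letter with an adjacent unbarred letter is also in W. Then the quasisymmetric generating functions of W with respect to the big bar order ≺ (all unbarred letters before all barred letters) and with respect to the natural order < coincide: Σ_{w∈W} Q_{Des_≺(w)}(x) = Σ_{w∈W} Q_{Des_<(w)}(x). -/
open scoped BigOperators
open Classical

noncomputable section

namespace NCS

/-- A colored letter: an element of `Fin N` together with a `Bool` which is
`true` for barred letters and `false` for unbarred letters. -/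
abbrev Letter (N : ℕ) := Fin N × Bool

variable {N : ℕ}

/-- The key of the natural order `1 < 1̄ < 2 < 2̄ < ⋯ < N < N̄`. -/
def natKey (x : Letter N) : ℕ := 2 * x.1.val + (if x.2 then 1 else 0)

/-- The key of the big bar order `1 ≺ ⋯ ≺ N ≺ 1̄ ≺ ⋯ ≺ N̄`. -/
def barKey (N : ℕ) (x : Letter N) : ℕ := if x.2 then N + x.1.val else x.1.val

/-- A shuffle order on the alphabet, encoded by an injective key function which is
increasing on unbarred letters and on barred letters. -/
def IsShuffleKey (key : Letter N → ℕ) : Prop :=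
  Function.Injective key ∧
  (∀ a b : Fin N, a < b → key (a, false) < key (b, false)) ∧
  (∀ a b : Fin N, a < b → key (a, true) < key (b, true))

/-- The free associative `ℤ`-algebra on the alphabet. -/
abbrev FA (N : ℕ) := MonoidAlgebra ℤ (FreeMonoid (Letter N))

/-- The monomial of a colored word. -/
def wrd (w : List (Letter N)) : FA N := MonoidAlgebra.single (FreeMonoid.ofList w) 1

/-- `y ≥' x` : `y > x`, or `y` and `x` are equal barred letters. -/
def colGE (key : Letter N → ℕ) (y x : Letter N) : Prop :=
  key x < key y ∨ (y = x ∧ y.2 = true)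

/-- `y ≤'' z` : `y < z`, or `y` and `z` are equal unbarred letters. -/
def rowLE (key : Letter N → ℕ) (y z : Letter N) : Prop :=
  key y < key z ∨ (y = z ∧ y.2 = false)

/-- `x ≤col y` : `x < y`, or `x` and `y` are equal barred letters. -/
def colLE (key : Letter N → ℕ) (x y : Letter N) : Prop :=
  key x < key y ∨ (x = y ∧ x.2 = true)

/-- The noncommutative super elementary symmetric function `e_k(S)` with letters
restricted to the set `S`. -/
def eSet (key : Letter N → ℕ) (S : Set (Letter N)) (k : ℕ) : FA N :=
  ∑ f ∈ (Finset.univ : Finset (Fin k → Letter N)).filter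
      (fun f => (∀ i, f i ∈ S) ∧ ∀ i j : Fin k, (j : ℕ) = (i : ℕ) + 1 → colGE key (f i) (f j)),
    wrd (List.ofFn f)

/-- The noncommutative super elementary symmetric function `e_k(u)`. -/
def eU (key : Letter N → ℕ) (k : ℕ) : FA N := eSet key Set.univ k

/-- `e_k(u)` with integer index; `0` for negative `k`. -/
def eZ (key : Letter N → ℕ) (k : ℤ) : FA N := if 0 ≤ k then eU key k.toNat else 0

/-- `e_k(S)` with integer index; `0` for negative `k`. -/
def eSetZ (key : Letter N → ℕ) (S : Set (Letter N)) (k : ℤ) : FA N :=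
  if 0 ≤ k then eSet key S k.toNat else 0

/-- The noncommutative super homogeneous symmetric function `h_k(u)`. -/
def hU (key : Letter N → ℕ) (k : ℕ) : FA N :=
  ∑ f ∈ (Finset.univ : Finset (Fin k → Letter N)).filter
      (fun f => ∀ i j : Fin k, (j : ℕ) = (i : ℕ) + 1 → rowLE key (f i) (f j)),
    wrd (List.ofFn f)

/-- The relations generating the two-sided ideal `I_Kron` (with respect to the
natural order; recall `natKey x + 1 = natKey y` says `x = y↓`). -/
inductive kronRel (N : ℕ) : FA N → FA N → Prop
  | rel3 (x y : Letter N) (hy : y.2 = false) (h : natKey x < natKey y) :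
      kronRel N (wrd [y, y, x]) (wrd [y, x, y])
  | rel3b (y z : Letter N) (hy : y.2 = false) (h : natKey y < natKey z) :
      kronRel N (wrd [z, y, y]) (wrd [y, z, y])
  | rel4 (y z : Letter N) (hy : y.2 = true) (h : natKey y < natKey z) :
      kronRel N (wrd [y, y, z]) (wrd [y, z, y])
  | rel4b (x y : Letter N) (hy : y.2 = true) (h : natKey x < natKey y) :
      kronRel N (wrd [x, y, y]) (wrd [y, x, y])
  | rot (x y z : Letter N) (h1 : natKey x + 1 = natKey y) (h2 : natKey y + 1 = natKey z) :
      kronRel N (wrd [x, z, y] - wrd [z, x, y]) (wrd [y, x, z] - wrd [y, z, x])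
  | far (x z : Letter N) (h : natKey x + 2 < natKey z) :
      kronRel N (wrd [x, z]) (wrd [z, x])

/-- The relations generating the ⋖-colored plactic ideal `I_plac^⋖`. -/
inductive placRel (N : ℕ) (key : Letter N → ℕ) : FA N → FA N → Prop
  | k1 (x y z : Letter N) (h1 : key x < key y) (h2 : key y < key z) :
      placRel N key (wrd [x, z, y]) (wrd [z, x, y])
  | k2 (x y z : Letter N) (h1 : key x < key y) (h2 : key y < key z) :
      placRel N key (wrd [y, x, z]) (wrd [y, z, x])
  | k3 (x y : Letter N) (hy : y.2 = false) (h : key x < key y) :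
      placRel N key (wrd [y, y, x]) (wrd [y, x, y])
  | k3b (y z : Letter N) (hy : y.2 = false) (h : key y < key z) :
      placRel N key (wrd [z, y, y]) (wrd [y, z, y])
  | k4 (y z : Letter N) (hy : y.2 = true) (h : key y < key z) :
      placRel N key (wrd [y, y, z]) (wrd [y, z, y])
  | k4b (x y : Letter N) (hy : y.2 = true) (h : key x < key y) :
      placRel N key (wrd [x, y, y]) (wrd [y, x, y])

/-- The relations generating the ideal `I_kronknuth`. -/
inductive kkRel (N : ℕ) : FA N → FA N → Prop
  | rel3 (x y : Letter N) (hy : y.2 = false) (h : natKey x < natKey y) :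
      kkRel N (wrd [y, y, x]) (wrd [y, x, y])
  | rel3b (y z : Letter N) (hy : y.2 = false) (h : natKey y < natKey z) :
      kkRel N (wrd [z, y, y]) (wrd [y, z, y])
  | rel4 (y z : Letter N) (hy : y.2 = true) (h : natKey y < natKey z) :
      kkRel N (wrd [y, y, z]) (wrd [y, z, y])
  | rel4b (x y : Letter N) (hy : y.2 = true) (h : natKey x < natKey y) :
      kkRel N (wrd [x, y, y]) (wrd [y, x, y])
  | rot (x y z : Letter N) (h1 : natKey x + 1 = natKey y) (h2 : natKey y + 1 = natKey z) :
      kkRel N (wrd [x, z, y] - wrd [z, x, y]) (wrd [y, x, z] - wrd [y, z, x])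
  | kk1 (x y z : Letter N) (h1 : natKey x < natKey y) (h2 : natKey y < natKey z)
      (h3 : natKey x + 2 < natKey z) :
      kkRel N (wrd [x, z, y]) (wrd [z, x, y])
  | kk2 (x y z : Letter N) (h1 : natKey x < natKey y) (h2 : natKey y < natKey z)
      (h3 : natKey x + 2 < natKey z) :
      kkRel N (wrd [y, x, z]) (wrd [y, z, x])

end NCS
namespace NCS

variable {N : ℕ}

/-- The ordinary word `w^r`: barred letters shuffled to the right, that subword
reversed and de-barred.  Letters are recorded `1`-indexed. -/
def plainr (w : List (Letter N)) : List ℕ :=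
  (w.filter (fun x => !x.2)).map (fun x => x.1.val + 1) ++
    ((w.filter (fun x => x.2)).reverse).map (fun x => x.1.val + 1)

/-- The number of barred letters of a colored word. -/
def barredCount (w : List (Letter N)) : ℕ := (w.filter (fun x => x.2)).length

/-- An ordinary word (in the `1`-indexed alphabet) is Yamanouchi of content `lam`
(`lam i` = multiplicity of the letter `i+1`). -/
def IsYamOf (lam : ℕ → ℕ) (u : List ℕ) : Prop :=
  (∀ i : ℕ, u.count (i + 1) = lam i) ∧
    ∀ t i : ℕ, (u.drop t).count (i + 2) ≤ (u.drop t).count (i + 1)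

/-- An ordinary word is Yamanouchi (of some content). -/
def IsYamWord (u : List ℕ) : Prop :=
  ∀ t i : ℕ, (u.drop t).count (i + 2) ≤ (u.drop t).count (i + 1)

/-- The set of colored Yamanouchi words of content `lam` with exactly `d` barred letters. -/
def CYW (N : ℕ) (lam : ℕ → ℕ) (d : ℕ) : Set (List (Letter N)) :=
  {w | IsYamOf lam (plainr w) ∧ barredCount w = d}

/-- `CYW` as a finset (all its members have length `n = Σ lam`). -/
def CYWfin (N : ℕ) (lam : ℕ → ℕ) (d n : ℕ) : Finset (List (Letter N)) :=
  ((Finset.univ : Finset (Fin n → Letter N)).image List.ofFn).filter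
    (fun w => w ∈ CYW N lam d)

/-- A set of colored words is shuffle closed. -/
def ShuffleClosed (W : Set (List (Letter N))) : Prop :=
  ∀ (u v : List (Letter N)) (x y : Letter N), x.2 ≠ y.2 →
    (u ++ x :: y :: v) ∈ W → (u ++ y :: x :: v) ∈ W

/-- The ⋖-descent set of a colored word (`0`-indexed positions). -/
def DesSet (key : Letter N → ℕ) (w : List (Letter N)) : Set ℕ :=
  {i | ∃ h : i + 1 < w.length,
    key (w.get ⟨i + 1, h⟩) < key (w.get ⟨i, Nat.lt_of_succ_lt h⟩) ∨
      (w.get ⟨i, Nat.lt_of_succ_lt h⟩ = w.get ⟨i + 1, h⟩ ∧ (w.get ⟨i + 1, h⟩).2 = true)}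

/-- Coefficient of the monomial `m` in Gessel's fundamental quasisymmetric
function `Q_S` for words of length `t`. -/
def Qcoeff (t : ℕ) (S : Set ℕ) (m : ℕ →₀ ℕ) : ℤ :=
  Nat.card {i : Fin t → ℕ //
    (∀ j k : Fin t, j ≤ k → i j ≤ i k) ∧
    (∀ j k : Fin t, (k : ℕ) = (j : ℕ) + 1 → (j : ℕ) ∈ S → i j < i k) ∧
    (∀ v : ℕ, m v = (Finset.univ.filter (fun j : Fin t => i j = v)).card)}

/-- Gessel's fundamental quasisymmetric function as a power series in the
variables `x_0, x_1, …`. -/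
def Qqs (t : ℕ) (S : Set ℕ) : MvPowerSeries ℕ ℤ := fun m => Qcoeff t S m

/-- The boxes of the (possibly restricted) shape with column lengths bounded by
`rows` and row lengths given by `nu`. -/
def shapeFin (nu : ℕ → ℕ) (rows : ℕ) : Finset (ℕ × ℕ) :=
  (Finset.range rows ×ˢ Finset.range (nu 0)).filter (fun p => p.2 < nu p.1)

/-- `E` is a ⋖-colored tableau of shape `nu` (rows weakly increase with equal
letters unbarred; columns weakly increase with equal letters barred). -/
def IsCT (key : Letter N → ℕ) (nu : ℕ → ℕ) (E : ℕ × ℕ → Letter N) : Prop :=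
  (∀ r c : ℕ, c + 1 < nu r → rowLE key (E (r, c)) (E (r, c + 1))) ∧
  (∀ r c : ℕ, c < nu (r + 1) → colLE key (E (r, c)) (E (r + 1, c)))

/-- Pad a partition given on `Fin n` to a function on `ℕ`. -/
def padF {n : ℕ} (f : Fin n → ℕ) : ℕ → ℕ := fun i => if h : i < n then f ⟨i, h⟩ else 0

/-- Extend a filling of the shape to all of `ℕ × ℕ` by a junk letter. -/
def extT (nu : ℕ → ℕ) (rows : ℕ) (junk : Letter N)
    (T : {p : ℕ × ℕ // p ∈ shapeFin nu rows} → Letter N) : ℕ × ℕ → Letter N :=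
  fun p => if h : p ∈ shapeFin nu rows then T ⟨p, h⟩ else junk

/-- The reading word `sqread`: diagonals from southwest to northeast; on each
diagonal the unbarred entries are read in the ↖ direction followed by the barred
entries in the ↘ direction. -/
def sqread (nu : ℕ → ℕ) (rows : ℕ) (E : ℕ × ℕ → Letter N) : List (Letter N) :=
  (List.range (rows + nu 0)).flatMap (fun k =>
    let boxes : List (ℕ × ℕ) := (List.range rows).filterMap (fun (r : ℕ) =>
      let c : ℤ := (r : ℤ) + (k : ℤ) - (rows : ℤ) + 1
      if 0 ≤ c ∧ c.toNat < nu r then some (r, c.toNat) else none)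
    ((boxes.filter (fun b => !(E b).2)).reverse ++ boxes.filter (fun b => (E b).2)).map E)

/-- The column reading word: columns read bottom to top, leftmost column first. -/
def colword (nu : ℕ → ℕ) (rows : ℕ) (E : ℕ × ℕ → Letter N) : List (Letter N) :=
  (List.range (nu 0)).flatMap (fun c =>
    ((List.range rows).filter (fun r => decide (c < nu r))).reverse.map (fun r => E (r, c)))

/-- The Kostka number: semistandard Young tableaux of shape `nu` and content `m`
(entries `1`-indexed; entry `i+1` corresponds to the variable `x_i`). -/
def kostka (nu : ℕ → ℕ) (m : ℕ →₀ ℕ) : ℤ :=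
  Nat.card {T : ℕ × ℕ → ℕ //
    (∀ r c : ℕ, c + 1 < nu r → T (r, c) ≤ T (r, c + 1)) ∧
    (∀ r c : ℕ, c < nu (r + 1) → T (r, c) < T (r + 1, c)) ∧
    (∀ r c : ℕ, c < nu r → 1 ≤ T (r, c)) ∧
    (∀ r c : ℕ, ¬ c < nu r → T (r, c) = 0) ∧
    (∀ i : ℕ, (m i : ℕ) = Nat.card {p : ℕ × ℕ // p.2 < nu p.1 ∧ T p = i + 1})}

/-- The parts of a partition of `n`, as a weakly decreasing list. -/
def partList {n : ℕ} (ν : Nat.Partition n) : List ℕ := (ν.parts.sort (· ≤ ·)).reverse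

/-- The parts of a partition of `n`, as a function `ℕ → ℕ` (`0`-indexed). -/
def partFun {n : ℕ} (ν : Nat.Partition n) : ℕ → ℕ := fun i => (partList ν).getD i 0

/-- The conjugate partition: `ν'_j = #{i < rows : ν_i ≥ j}`. -/
def conjP (nu : ℕ → ℕ) (j : ℕ) (rows : ℕ) : ℕ :=
  ((Finset.range rows).filter (fun i => j ≤ nu i)).card

/-- The noncommutative super Schur function
`𝔍_ν(u) = Σ_{π ∈ S_t} sgn(π) e_{ν'_1+π(1)-1}(u) ⋯ e_{ν'_t+π(t)-t}(u)`, `t = ν_1`. -/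
def JncF (key : Letter N → ℕ) (nu : ℕ → ℕ) (rows : ℕ) : FA N :=
  ∑ π : Equiv.Perm (Fin (nu 0)),
    (Equiv.Perm.sign π : ℤ) •
      (List.ofFn (fun i : Fin (nu 0) =>
        eZ key ((conjP nu (i.1 + 1) rows : ℤ) + ((π i).1 : ℤ) - (i.1 : ℤ)))).prod

end NCS
namespace NCS

variable {N : ℕ}

/-- A partition diagram (as a set of `0`-indexed boxes). -/
def IsPartitionDiagram (P : Finset (ℕ × ℕ)) : Prop :=
  ∀ p ∈ P, ∀ q : ℕ × ℕ, q.1 ≤ p.1 → q.2 ≤ p.2 → q ∈ P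

/-- `p ≤ q` in the northeast order: `q.1 ≤ p.1` and `p.2 ≤ q.2`. -/
def neLE (p q : ℕ × ℕ) : Prop := q.1 ≤ p.1 ∧ p.2 ≤ q.2

/-- A restricted shape: a lower order ideal of a partition diagram for the
northeast order. -/
def IsRestrictedShape (D : Finset (ℕ × ℕ)) : Prop :=
  ∃ P : Finset (ℕ × ℕ), IsPartitionDiagram P ∧ D ⊆ P ∧
    ∀ p ∈ P, ∀ q ∈ D, neLE p q → p ∈ D

/-- A restricted colored tableau (for the natural order). -/
structure RCT (N : ℕ) where
  shape : Finset (ℕ × ℕ)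
  restricted : IsRestrictedShape shape
  entry : ℕ × ℕ → Letter N
  row : ∀ r c : ℕ, (r, c) ∈ shape → (r, c + 1) ∈ shape →
    natKey (entry (r, c)) < natKey (entry (r, c + 1)) ∨
      (entry (r, c) = entry (r, c + 1) ∧ (entry (r, c)).2 = false)
  col : ∀ r c : ℕ, (r, c) ∈ shape → (r + 1, c) ∈ shape →
    natKey (entry (r, c)) < natKey (entry (r + 1, c)) ∨
      (entry (r, c) = entry (r + 1, c) ∧ (entry (r, c)).2 = true)

/-- A ↖ arrow of `R` from the box `tail` (containing `a+1`) to the box `head`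
(containing `a`); the two boxes are opposite corners of a rectangle whose
intersection with the shape is an arrow subtableau. -/
def nwArrow (R : RCT N) (tail head : ℕ × ℕ) : Prop :=
  head ∈ R.shape ∧ tail ∈ R.shape ∧ head.1 < tail.1 ∧ head.2 < tail.2 ∧
  (∃ a b : Fin N, R.entry head = (a, false) ∧ R.entry tail = (b, false) ∧
    (b : ℕ) = (a : ℕ) + 1) ∧
  ((tail.1 = head.1 + 1 ∧ tail.2 = head.2 + 1 ∧ (tail.1, head.2) ∈ R.shape) ∨
   (head.1 + 1 < tail.1 ∧
    (∀ p ∈ R.shape, head.1 ≤ p.1 → p.1 ≤ tail.1 → head.2 ≤ p.2 → p.2 ≤ tail.2 →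
      p.2 = head.2 ∨ p.1 = tail.1) ∧
    (∀ r : ℕ, head.1 ≤ r → r ≤ tail.1 → (r, head.2) ∈ R.shape) ∧
    (∀ c : ℕ, head.2 ≤ c → c ≤ tail.2 → (tail.1, c) ∈ R.shape)))

/-- A ↘ arrow of `R` from the box `tail` (containing `ā`) to the box `head`
(containing `(a+1)`-bar). -/
def seArrow (R : RCT N) (tail head : ℕ × ℕ) : Prop :=
  tail ∈ R.shape ∧ head ∈ R.shape ∧ tail.1 < head.1 ∧ tail.2 < head.2 ∧
  (∃ a b : Fin N, R.entry tail = (a, true) ∧ R.entry head = (b, true) ∧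
    (b : ℕ) = (a : ℕ) + 1) ∧
  ((head.1 = tail.1 + 1 ∧ head.2 = tail.2 + 1 ∧ (head.1, tail.2) ∈ R.shape) ∨
   (tail.2 + 1 < head.2 ∧
    (∀ p ∈ R.shape, tail.1 ≤ p.1 → p.1 ≤ head.1 → tail.2 ≤ p.2 → p.2 ≤ head.2 →
      p.2 = tail.2 ∨ p.1 = head.1) ∧
    (∀ r : ℕ, tail.1 ≤ r → r ≤ head.1 → (r, tail.2) ∈ R.shape) ∧
    (∀ c : ℕ, tail.2 ≤ c → c ≤ head.2 → (head.1, c) ∈ R.shape)))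

/-- A box is the tail of an arrow of `R`. -/
def IsArrowTail (R : RCT N) (β : ℕ × ℕ) : Prop :=
  (∃ h, nwArrow R β h) ∨ (∃ h, seArrow R β h)

/-- A box which is maximal in `D` for the northeast order. -/
def NEMaximal (D : Finset (ℕ × ℕ)) (β : ℕ × ℕ) : Prop :=
  β ∈ D ∧ ∀ q ∈ D, neLE β q → q = β

/-- `L` is an arrow respecting reading order of the RCT `R`: an enumeration of
the boxes compatible with the northeast order, reading every arrow tail before
the corresponding head. -/
def IsARWord (R : RCT N) (L : List (ℕ × ℕ)) : Prop :=
  L.Nodup ∧ (∀ β : ℕ × ℕ, β ∈ L ↔ β ∈ R.shape) ∧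
  (∀ β β' : ℕ × ℕ, β ∈ L → β' ∈ L → neLE β β' → β ≠ β' →
    L.idxOf β < L.idxOf β') ∧
  (∀ t h : ℕ × ℕ, nwArrow R t h ∨ seArrow R t h → L.idxOf t < L.idxOf h)

end NCS
namespace NCS

variable {N : ℕ}

/-! ### Word conversion -/

/-- Rotate a list once to the right. -/
def rotR {α : Type*} (l : List α) : List α := l.rotate (l.length - 1)

/-- Word conversion: fix all letters not satisfying `p` and rotate each maximal
consecutive run of letters satisfying `p` once to the right. -/
def conv {α : Type*} (p : α → Bool) : List α → List α
  | [] => []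
  | x :: xs =>
    if p x = true then
      rotR ((x :: xs).takeWhile p) ++ conv p (xs.dropWhile p)
    else x :: conv p xs
termination_by l => l.length
decreasing_by
  · exact Nat.lt_succ_of_le ((List.dropWhile_suffix p).length_le)
  · exact Nat.lt_succ_self _

/-! ### Ordinary RSK insertion -/

/-- Row bumping: insert `x` into a weakly increasing row, bumping the leftmost
entry strictly greater than `x`. -/
def bumpRow : List ℕ → ℕ → List ℕ × Option ℕ
  | [], x => ([x], none)
  | y :: ys, x =>
    if x < y then (x :: ys, some y)
    else
      let p := bumpRow ys x
      (y :: p.1, p.2)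

/-- Schensted insertion of a letter into a tableau (given as its list of rows). -/
def insertEntry : List (List ℕ) → ℕ → List (List ℕ)
  | [], x => [[x]]
  | row :: rest, x =>
    match bumpRow row x with
    | (row', none) => row' :: rest
    | (row', some y) => row' :: insertEntry rest y

/-- The insertion tableau of an ordinary word. -/
def insertionTableau (w : List ℕ) : List (List ℕ) := w.foldl insertEntry []

/-- A tableau (list of rows) is superstandard: row `i` is filled with `i+1`'s
(`1`-indexed letters). -/
def IsSuperstandard (Q : List (List ℕ)) : Prop :=
  ∀ i : ℕ, ∀ h : i < Q.length, ∀ v ∈ Q.get ⟨i, h⟩, v = i + 1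

/-! ### Standardization -/

/-- The ⋖-standardization of a colored word: occurrences of each letter are
relabelled, smallest letter first, left to right for unbarred letters and
right to left for barred letters, by `1, 2, …`. -/
def stdz (key : Letter N → ℕ) (w : List (Letter N)) : List ℕ :=
  (List.finRange w.length).map (fun i =>
    ((List.finRange w.length).filter
        (fun j => decide (key (w.get j) < key (w.get i)))).length +
    (if (w.get i).2 then
        ((List.finRange w.length).filter
          (fun j => decide (i < j ∧ w.get j = w.get i))).length
      else
        ((List.finRange w.length).filter
          (fun j => decide (j < i ∧ w.get j = w.get i))).length) + 1)

/-- The free `ℤ`-algebra on the ordinary (unbarred) alphabet `ℕ`. -/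
abbrev FAO := MonoidAlgebra ℤ (FreeMonoid ℕ)

/-- The monomial of an ordinary word. -/
def wrdO (w : List ℕ) : FAO := MonoidAlgebra.single (FreeMonoid.ofList w) 1

/-- The ordinary Knuth (plactic) relations. -/
inductive knuthRel : FAO → FAO → Prop
  | k1 (a b c : ℕ) (h1 : a < b) (h2 : b < c) : knuthRel (wrdO [a, c, b]) (wrdO [c, a, b])
  | k2 (a b c : ℕ) (h1 : a < b) (h2 : b < c) : knuthRel (wrdO [b, a, c]) (wrdO [b, c, a])
  | k3 (a b : ℕ) (h : a < b) : knuthRel (wrdO [b, b, a]) (wrdO [b, a, b])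
  | k4 (b c : ℕ) (h : b < c) : knuthRel (wrdO [c, b, b]) (wrdO [b, c, b])

/-! ### Pairing, the noncommutative Cauchy product, symmetric series -/

/-- The bilinear pairing on `U` for which the colored words are orthonormal. -/
def pairU (f g : FA N) : ℤ := ∑ w ∈ f.coeff.support, f.coeff w * g.coeff w

/-- Coefficient of `x^m` in the noncommutative Cauchy product
`Ω(x,u) = Π_j (c_{z_1}(x_j) ⋯ c_{z_{2N}}(x_j))`: the product of the `h_{m_j}(u)`
in increasing order of `j`. -/
def OmegaC (key : Letter N → ℕ) (m : ℕ →₀ ℕ) : FA N :=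
  ((m.support.sort (· ≤ ·)).map (fun j => hU key (m j))).prod

/-- Total degree of a monomial. -/
def degM (m : ℕ →₀ ℕ) : ℕ := m.sum fun _ k => k

/-- Coefficient of `x^m` in the monomial symmetric function `m_ν`. -/
def mCoeff {k : ℕ} (ν : Nat.Partition k) (m : ℕ →₀ ℕ) : ℤ :=
  if Multiset.map (fun j => m j) m.support.val = ν.parts then 1 else 0

/-- `h_ν(u) = h_{ν_1}(u) h_{ν_2}(u) ⋯`. -/
def hProd (key : Letter N → ℕ) (L : List ℕ) : FA N := (L.map (hU key)).prod

/-- Coefficient of `x^m` in `F_γ(x) = Σ_w γ_w Q_{Des(w)}(x)`. -/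
def FgammaC (key : Letter N → ℕ) (γ : FA N) (m : ℕ →₀ ℕ) : ℤ :=
  ∑ w ∈ γ.coeff.support, γ.coeff w *
    Qcoeff (FreeMonoid.toList w).length (DesSet key (FreeMonoid.toList w)) m

/-- A series (given by its coefficients) is symmetric. -/
def SymmSeries (F : (ℕ →₀ ℕ) → ℤ) : Prop :=
  ∀ σ : Equiv.Perm ℕ, ∀ m : ℕ →₀ ℕ, F (Finsupp.mapDomain σ m) = F m

/-! ### Characters of symmetric groups and Kronecker coefficients -/

/-- The power sum polynomial `p_k` in `n` variables. -/
def powS (n k : ℕ) : MvPolynomial (Fin n) ℤ := ∑ j : Fin n, MvPolynomial.X j ^ k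

/-- The Vandermonde alternant `a_δ = Σ_σ sgn(σ) Π_i x_{σ(i)}^{n-1-i}`. -/
def aDelta (n : ℕ) : MvPolynomial (Fin n) ℤ :=
  ∑ σ : Equiv.Perm (Fin n),
    (Equiv.Perm.sign σ : ℤ) • ∏ i : Fin n, MvPolynomial.X (σ i) ^ (n - 1 - (i : ℕ))

/-- The irreducible character `χ^λ` of `S_n` evaluated at `σ`, via the Frobenius
character formula: the coefficient of `x^{λ+δ}` in `a_δ · p_{cycleType σ}`. -/
def chi (n : ℕ) (lam : Fin n → ℕ) (σ : Equiv.Perm (Fin n)) : ℤ :=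
  MvPolynomial.coeff
    (Finsupp.equivFunOnFinite.symm (fun i : Fin n => lam i + (n - 1 - (i : ℕ))))
    (aDelta n * (σ.cycleType.map (fun k => powS n k)).prod)

/-- The hook partition `μ(d) = (n-d, 1^d)`, as a function on `Fin n`. -/
def hookP (n d : ℕ) : Fin n → ℕ :=
  fun i => if (i : ℕ) = 0 then n - d else if (i : ℕ) ≤ d then 1 else 0

/-- `n!` times the Kronecker coefficient `g_{λμν}`, via
`g = (1/n!) Σ_σ χ^λ(σ) χ^μ(σ) χ^ν(σ)`. -/
def kronC (n : ℕ) (lam mu nu : Fin n → ℕ) : ℤ :=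
  ∑ σ : Equiv.Perm (Fin n), chi n lam σ * chi n mu σ * chi n nu σ

/-! ### Power series in `s` and `t` over `U/I_kronknuth` -/

/-- The quotient `U/I_kronknuth`. -/
abbrev QKK (N : ℕ) := RingQuot (kkRel N)

/-- The image of a generator in `U/I_kronknuth`. -/
def uQ (x : Letter N) : QKK N := RingQuot.mkRingHom (kkRel N) (wrd [x])

/-- A power series in `s` (variable `0`) only. -/
def serS (c : ℕ → QKK N) : MvPowerSeries (Fin 2) (QKK N) :=
  fun m => if m 1 = 0 then c (m 0) else 0

/-- A power series in `t` (variable `1`) only. -/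
def serT (c : ℕ → QKK N) : MvPowerSeries (Fin 2) (QKK N) :=
  fun m => if m 0 = 0 then c (m 1) else 0

/-- A constant power series. -/
def constSer (a : QKK N) : MvPowerSeries (Fin 2) (QKK N) :=
  fun m => if m = 0 then a else 0

/-- `f_x = 1 + u_x s` (`x` unbarred), `(1 - u_x s)⁻¹ = Σ_k u_x^k s^k` (`x` barred). -/
def fSer (x : Letter N) : MvPowerSeries (Fin 2) (QKK N) :=
  serS (fun k => if x.2 then uQ x ^ k else if k = 0 then 1 else if k = 1 then uQ x else 0)

/-- The inverse of `f_x`. -/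
def fSerInv (x : Letter N) : MvPowerSeries (Fin 2) (QKK N) :=
  serS (fun k => if x.2 then (if k = 0 then 1 else if k = 1 then -uQ x else 0)
    else (-uQ x) ^ k)

/-- `g_z = 1 + u_z t` (`z` unbarred), `(1 - u_z t)⁻¹` (`z` barred). -/
def gSer (z : Letter N) : MvPowerSeries (Fin 2) (QKK N) :=
  serT (fun k => if z.2 then uQ z ^ k else if k = 0 then 1 else if k = 1 then uQ z else 0)

/-- The inverse of `g_z`. -/
def gSerInv (z : Letter N) : MvPowerSeries (Fin 2) (QKK N) :=
  serT (fun k => if z.2 then (if k = 0 then 1 else if k = 1 then -uQ z else 0)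
    else (-uQ z) ^ k)

end NCS

/-!
The coefficient of `x^m` in `Q_{Des_⋖(w)}` is `1` or `0` according to whether the weakly
increasing sequence of labels with content `m`, attached to the letters of `w`, cuts `w` into
⋖-rows: blocks of equal label without ⋖-descents. A ⋖-row is the unique arrangement of its
letters that increases weakly for ⋖, repeating only unbarred letters, so re-sorting each block
by another shuffle order ⋖' is a bijection between the words counted for ⋖ and for ⋖'. All
shuffle orders agree on letters of one colour, so re-sorting only moves barred letters past
unbarred ones and stays inside a shuffle closed set.
-/

theorem List.exists_eq_ofFn_of_map_snd_eq {α β : Type*} {p : List (α × β)} {w : List β}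
    (h : p.map Prod.snd = w) : ∃ i : Fin w.length → α, p = List.ofFn fun j => (i j, w.get j) := by
  subst h
  exact ⟨fun j => (p[j.1]'(by simpa using j.2)).1, List.ext_getElem (by simp) fun n _ _ => by simp⟩

namespace NCS

open scoped List

variable {N : ℕ}

theorem IsShuffleKey.le_iff {key : Letter N → ℕ} (hkey : IsShuffleKey key) {x y : Letter N}
    (hxy : x.2 = y.2) : key x ≤ key y ↔ x.1 ≤ y.1 := by
  obtain ⟨a, c⟩ := x
  obtain ⟨b, d⟩ := y
  obtain rfl : c = d := hxy
  have hmono : StrictMono fun a : Fin N => key (a, c) := by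
    cases c
    exacts [hkey.2.1, hkey.2.2]
  exact hmono.le_iff_le

theorem natKey_isShuffleKey : IsShuffleKey (natKey (N := N)) := by
  refine ⟨fun x y h => ?_, fun a b h => ?_, fun a b h => ?_⟩
  · obtain ⟨⟨a, ha⟩, c⟩ := x
    obtain ⟨⟨b, hb⟩, d⟩ := y
    cases c <;> cases d <;> simp [natKey] at h ⊢ <;> omega
  all_goals simp only [natKey, Bool.false_eq_true, if_true, if_false]; omega

theorem barKey_isShuffleKey : IsShuffleKey (barKey N) := by
  refine ⟨fun x y h => ?_, fun a b h => ?_, fun a b h => ?_⟩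
  · obtain ⟨⟨a, ha⟩, c⟩ := x
    obtain ⟨⟨b, hb⟩, d⟩ := y
    cases c <;> cases d <;> simp [barKey] at h ⊢ <;> omega
  all_goals simp only [barKey, Bool.false_eq_true, if_true, if_false]; omega

def ShuffleStep (a b : List (Letter N)) : Prop :=
  ∃ (u v : List (Letter N)) (x y : Letter N),
    x.2 ≠ y.2 ∧ a = u ++ x :: y :: v ∧ b = u ++ y :: x :: v

abbrev ShuffleEquiv : List (Letter N) → List (Letter N) → Prop := Relation.ReflTransGen ShuffleStep

instance : Std.Symm (ShuffleStep (N := N)) :=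
  ⟨fun _ _ ⟨u, v, x, y, hxy, ha, hb⟩ => ⟨u, v, y, x, hxy.symm, hb, ha⟩⟩

theorem ShuffleClosed.mem_of_shuffleEquiv {W : Set (List (Letter N))} (hW : ShuffleClosed W)
    {a b : List (Letter N)} (h : ShuffleEquiv a b) (ha : a ∈ W) : b ∈ W := by
  induction h with
  | refl => exact ha
  | tail _ hstep ih =>
    obtain ⟨u, v, x, y, hxy, rfl, rfl⟩ := hstep
    exact hW u v x y hxy ih

theorem ShuffleEquiv.cons (x : Letter N) {a b : List (Letter N)} (h : ShuffleEquiv a b) :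
    ShuffleEquiv (x :: a) (x :: b) :=
  Relation.ReflTransGen.lift (List.cons x)
    (fun _ _ ⟨u, v, y, z, hyz, ha, hb⟩ => ⟨x :: u, v, y, z, hyz, by rw [ha]; rfl, by rw [hb]; rfl⟩)
    _ _ h

theorem shuffleEquiv_cons_append {x : Letter N} (hx : x.2 = true) {u : List (Letter N)}
    (hu : ∀ y ∈ u, y.2 = false) (v : List (Letter N)) :
    ShuffleEquiv (x :: (u ++ v)) (u ++ x :: v) := by
  induction u with
  | nil => exact .refl
  | cons y u ih =>
    have hy : y.2 = false := hu y List.mem_cons_self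
    refine .head ⟨[], u ++ v, x, y, by simp [hx, hy], rfl, rfl⟩ ?_
    exact (ih fun z hz => hu z (List.mem_cons_of_mem y hz)).cons y

theorem shuffleEquiv_filter_append_filter (a : List (Letter N)) :
    ShuffleEquiv a (a.filter (·.2 = false) ++ a.filter (·.2 = true)) := by
  induction a with
  | nil => exact .refl
  | cons x a ih =>
    cases hx : x.2
    · simpa [List.filter_cons, hx] using ih.cons x
    · simp only [List.filter_cons, hx]
      refine (ih.cons x).trans (shuffleEquiv_cons_append hx (fun y hy => ?_) _)
      simpa using List.of_mem_filter hy

theorem shuffleEquiv_of_filter_eq {a b : List (Letter N)}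
    (h : ∀ c : Bool, a.filter (·.2 = c) = b.filter (·.2 = c)) : ShuffleEquiv a b := by
  refine (shuffleEquiv_filter_append_filter a).trans ?_
  rw [h false, h true]
  exact symm (shuffleEquiv_filter_append_filter b)

def LabelRowLE (key : Letter N → ℕ) (p q : ℕ × Letter N) : Prop :=
  p.1 < q.1 ∨ p.1 = q.1 ∧ rowLE key p.2 q.2

def labelKey (key : Letter N → ℕ) (p : ℕ × Letter N) : ℕ ×ₗ ℕ := toLex (p.1, key p.2)

section Labelled

variable {key : Letter N → ℕ}

theorem labelKey_injective (hkey : Function.Injective key) : Function.Injective (labelKey key) :=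
  fun p q h => by
    obtain ⟨h₁, h₂⟩ := Prod.mk.inj (toLex.injective h)
    exact Prod.ext h₁ (hkey h₂)

theorem labelRowLE_iff {p q : ℕ × Letter N} :
    LabelRowLE key p q ↔ labelKey key p < labelKey key q ∨ p = q ∧ p.2.2 = false := by
  obtain ⟨a, x⟩ := p
  obtain ⟨b, y⟩ := q
  simp only [LabelRowLE, rowLE, labelKey, Prod.Lex.lt_iff, ofLex_toLex, Prod.mk.injEq]
  grind

theorem LabelRowLE.labelKey_le {p q : ℕ × Letter N} (h : LabelRowLE key p q) :
    labelKey key p ≤ labelKey key q := by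
  rcases labelRowLE_iff.mp h with h | ⟨rfl, -⟩
  exacts [h.le, le_rfl]

theorem LabelRowLE.fst_le {p q : ℕ × Letter N} (h : LabelRowLE key p q) : p.1 ≤ q.1 := by
  rcases h with h | ⟨h, -⟩
  exacts [h.le, h.le]

instance : IsTrans (ℕ × Letter N) (LabelRowLE key) := by
  refine ⟨fun p q r hpq hqr => labelRowLE_iff.mpr ?_⟩
  rcases labelRowLE_iff.mp hpq with hpq | ⟨rfl, hp⟩ <;>
    rcases labelRowLE_iff.mp hqr with hqr | ⟨rfl, hq⟩
  exacts [.inl (hpq.trans hqr), .inl hpq, .inl hqr, .inr ⟨rfl, hp⟩]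

def sortByLabelKey (key : Letter N → ℕ) (p : List (ℕ × Letter N)) : List (ℕ × Letter N) :=
  p.mergeSort fun a b => decide (labelKey key a ≤ labelKey key b)

theorem sortByLabelKey_perm (p : List (ℕ × Letter N)) : sortByLabelKey key p ~ p :=
  List.mergeSort_perm _ _

theorem pairwise_sortByLabelKey (p : List (ℕ × Letter N)) :
    (sortByLabelKey key p).Pairwise fun a b => labelKey key a ≤ labelKey key b := by
  simpa [sortByLabelKey] using
    List.pairwise_mergeSort (le := fun a b => decide (labelKey key a ≤ labelKey key b))
      (fun a b c => by simpa using le_trans) (fun a b => by simpa using le_total _ _) p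

theorem sortByLabelKey_eq_of_perm (hkey : Function.Injective key) {p q : List (ℕ × Letter N)}
    (hp : p.Pairwise fun a b => labelKey key a ≤ labelKey key b) (hqp : q ~ p) :
    sortByLabelKey key q = p :=
  ((sortByLabelKey_perm q).trans hqp).eq_of_pairwise
    (fun _ _ _ _ hab hba => labelKey_injective hkey (le_antisymm hab hba))
    (pairwise_sortByLabelKey q) hp

/-- Letters of equal label and equal `k₂`-key are equal, and a letter repeated within a `k₁`-row
is unbarred. -/
theorem pairwise_labelRowLE_sortByLabelKey {k₁ k₂ : Letter N → ℕ} (hk₂ : Function.Injective k₂)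
    {p : List (ℕ × Letter N)} (hp : p.Pairwise (LabelRowLE k₁)) :
    (sortByLabelKey k₂ p).Pairwise (LabelRowLE k₂) := by
  rw [List.pairwise_iff_forall_sublist]
  intro a b hab
  rw [labelRowLE_iff]
  rcases (List.pairwise_iff_forall_sublist.mp (pairwise_sortByLabelKey p) hab).lt_or_eq
    with hlt | heq
  · exact .inl hlt
  obtain rfl := labelKey_injective hk₂ heq
  have hdup : [a, a] <+ p := by
    have h2 : 2 ≤ (sortByLabelKey k₂ p).count a := (List.replicate_sublist_iff (n := 2)).mp hab
    exact List.replicate_sublist_iff.mpr ((sortByLabelKey_perm p).count_eq a ▸ h2)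
  rcases labelRowLE_iff.mp (List.pairwise_iff_forall_sublist.mp hp hdup) with h | h
  · exact absurd h (lt_irrefl _)
  · exact .inr h

theorem labelKey_le_iff_of_color_eq (hkey : IsShuffleKey key) {p q : ℕ × Letter N}
    (h : p.2.2 = q.2.2) :
    labelKey key p ≤ labelKey key q ↔ toLex (p.1, p.2.1) ≤ toLex (q.1, q.2.1) := by
  simp only [labelKey, Prod.Lex.le_iff, ofLex_toLex, hkey.le_iff h]

/-- All shuffle keys order the letters of one colour alike, so re-sorting keeps the subword of
each colour. -/
theorem shuffleEquiv_map_snd_sortByLabelKey {k₁ k₂ : Letter N → ℕ} (hk₁ : IsShuffleKey k₁)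
    (hk₂ : IsShuffleKey k₂) {p : List (ℕ × Letter N)} (hp : p.Pairwise (LabelRowLE k₁)) :
    ShuffleEquiv (p.map Prod.snd) ((sortByLabelKey k₂ p).map Prod.snd) := by
  refine shuffleEquiv_of_filter_eq fun c => ?_
  simp only [List.filter_map]
  congr 1
  refine ((sortByLabelKey_perm p).filter _).symm.eq_of_pairwise
    (fun _ _ _ _ hab hba => labelKey_injective hk₂.1 (le_antisymm hab hba)) ?_
    ((pairwise_sortByLabelKey p).filter _)
  refine (hp.filter _).imp_of_mem fun {a b} ha hb hab => ?_
  have hcol : a.2.2 = b.2.2 := (by simpa using List.of_mem_filter ha : a.2.2 = c).trans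
    (by simpa using List.of_mem_filter hb : b.2.2 = c).symm
  exact (labelKey_le_iff_of_color_eq hk₂ hcol).mpr
    ((labelKey_le_iff_of_color_eq hk₁ hcol).mp hab.labelKey_le)

end Labelled

def labels (m : ℕ →₀ ℕ) : List ℕ := (Finsupp.toMultiset m).sort

def IsRowLabelling (key : Letter N → ℕ) (m : ℕ →₀ ℕ) (p : List (ℕ × Letter N)) : Prop :=
  p.map Prod.fst = labels m ∧ p.Pairwise (LabelRowLE key)

def HasRowLabelling (key : Letter N → ℕ) (m : ℕ →₀ ℕ) (w : List (Letter N)) : Prop :=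
  ∃ p, IsRowLabelling key m p ∧ p.map Prod.snd = w

def resortRows (key : Letter N → ℕ) (m : ℕ →₀ ℕ) (w : List (Letter N)) : List (Letter N) :=
  (sortByLabelKey key ((labels m).zip w)).map Prod.snd

section RowLabelling

variable {k₁ k₂ : Letter N → ℕ} {m : ℕ →₀ ℕ}

theorem IsRowLabelling.eq_zip {p : List (ℕ × Letter N)} (hp : IsRowLabelling k₁ m p) :
    p = (labels m).zip (p.map Prod.snd) :=
  List.zip_of_prod hp.1 rfl

theorem IsRowLabelling.sortByLabelKey (hk₂ : Function.Injective k₂) {p : List (ℕ × Letter N)}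
    (hp : IsRowLabelling k₁ m p) : IsRowLabelling k₂ m (sortByLabelKey k₂ p) := by
  have hrow := pairwise_labelRowLE_sortByLabelKey hk₂ hp.2
  refine ⟨List.Perm.eq_of_pairwise (fun _ _ _ _ => le_antisymm) (List.pairwise_map.mpr
    (hrow.imp LabelRowLE.fst_le)) ?_ ?_, hrow⟩
  · exact Multiset.pairwise_sort _ _
  · exact hp.1 ▸ (sortByLabelKey_perm p).map Prod.fst

theorem HasRowLabelling.resortRows_resortRows (hk₁ : Function.Injective k₁)
    (hk₂ : Function.Injective k₂) {w : List (Letter N)} (hw : HasRowLabelling k₁ m w) :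
    resortRows k₁ m (resortRows k₂ m w) = w := by
  obtain ⟨p, hp, rfl⟩ := hw
  unfold resortRows
  rw [← hp.eq_zip, ← (hp.sortByLabelKey hk₂).eq_zip,
    sortByLabelKey_eq_of_perm hk₁ (hp.2.imp LabelRowLE.labelKey_le) (sortByLabelKey_perm p)]

theorem HasRowLabelling.shuffleEquiv_resortRows (hk₁ : IsShuffleKey k₁) (hk₂ : IsShuffleKey k₂)
    {w : List (Letter N)} (hw : HasRowLabelling k₁ m w) : ShuffleEquiv w (resortRows k₂ m w) := by
  obtain ⟨p, hp, rfl⟩ := hw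
  rw [resortRows, ← hp.eq_zip]
  exact shuffleEquiv_map_snd_sortByLabelKey hk₁ hk₂ hp.2

theorem HasRowLabelling.resortRows (hk₂ : Function.Injective k₂) {w : List (Letter N)}
    (hw : HasRowLabelling k₁ m w) : HasRowLabelling k₂ m (resortRows k₂ m w) := by
  obtain ⟨p, hp, rfl⟩ := hw
  exact ⟨_, hp.sortByLabelKey hk₂, by rw [NCS.resortRows, ← hp.eq_zip]⟩

end RowLabelling

theorem ofFn_eq_labels_iff {t : ℕ} (i : Fin t → ℕ) (m : ℕ →₀ ℕ) :
    List.ofFn i = labels m ↔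
      Monotone i ∧ ∀ v, m v = (Finset.univ.filter fun j => i j = v).card := by
  have hcount (v : ℕ) : (List.ofFn i).count v = (Finset.univ.filter fun j => i j = v).card := by
    rw [← Multiset.coe_count, ← Fin.univ_val_map, Multiset.count_map, Finset.card_def,
      Finset.filter_val]
    simp only [eq_comm]
  have hlabels : (labels m).Pairwise (· ≤ ·) := Multiset.pairwise_sort _ _
  constructor
  · intro h
    refine ⟨List.sortedLE_ofFn_iff.mp (h ▸ hlabels.sortedLE), fun v => ?_⟩
    rw [← hcount, h, ← Multiset.coe_count, labels, Multiset.sort_eq, Finsupp.count_toMultiset]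
  · rintro ⟨hmono, hm⟩
    refine List.Perm.eq_of_pairwise (fun _ _ _ _ => le_antisymm)
      (List.sortedLE_ofFn_iff.mpr hmono).pairwise hlabels ?_
    rw [← Multiset.coe_eq_coe, labels, Multiset.sort_eq]
    ext v
    rw [Multiset.coe_count, hcount, Finsupp.count_toMultiset, hm]

theorem rowLE_iff_not_descent {key : Letter N → ℕ} (hkey : Function.Injective key)
    (x y : Letter N) : rowLE key x y ↔ ¬(key y < key x ∨ x = y ∧ y.2 = true) := by
  constructor
  · rintro (h | ⟨rfl, hx⟩) (h' | ⟨hxy, hy⟩)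
    · omega
    · exact lt_irrefl _ (hxy ▸ h)
    · exact lt_irrefl _ h'
    · simp_all
  · intro h
    rcases lt_or_ge (key x) (key y) with hlt | hge
    · exact .inl hlt
    · obtain rfl : x = y := hkey (le_antisymm (not_lt.mp fun h' => h (.inl h')) hge)
      exact .inr ⟨rfl, by simpa using fun hx => h (.inr ⟨rfl, hx⟩)⟩

theorem pairwise_labelRowLE_ofFn_iff {key : Letter N → ℕ} (hkey : Function.Injective key)
    {w : List (Letter N)} {i : Fin w.length → ℕ} (hi : Monotone i) :
    (List.ofFn fun j => (i j, w.get j)).Pairwise (LabelRowLE key) ↔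
      ∀ j k : Fin w.length, (k : ℕ) = j + 1 → (j : ℕ) ∈ DesSet key w → i j < i k := by
  rw [← List.isChain_iff_pairwise, List.isChain_ofFn]
  constructor
  · rintro h j k hk ⟨hj, hdes⟩
    obtain rfl : k = ⟨j + 1, hj⟩ := Fin.ext hk
    rcases h j hj with hlt | ⟨-, hrow⟩
    · exact hlt
    · exact absurd hdes ((rowLE_iff_not_descent hkey _ _).mp hrow)
  · intro h j hj
    rcases (hi (Fin.mk_le_mk.mpr j.le_succ)).lt_or_eq with hlt | heq
    · exact .inl hlt
    · refine .inr ⟨heq, (rowLE_iff_not_descent hkey _ _).mpr fun hdes => ?_⟩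
      exact (h ⟨j, _⟩ ⟨j + 1, hj⟩ rfl ⟨hj, hdes⟩).ne heq

theorem Qcoeff_DesSet_eq_ite {key : Letter N → ℕ} (hkey : Function.Injective key) (m : ℕ →₀ ℕ)
    (w : List (Letter N)) :
    Qcoeff w.length (DesSet key w) m = if HasRowLabelling key m w then 1 else 0 := by
  unfold Qcoeff
  split_ifs with h
  · rw [Nat.cast_eq_one, Nat.card_eq_one_iff_unique]
    refine ⟨⟨fun a b => Subtype.ext (List.ofFn_injective ?_)⟩, ?_⟩
    · rw [(ofFn_eq_labels_iff _ m).mpr ⟨a.2.1, a.2.2.2⟩,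
        (ofFn_eq_labels_iff _ m).mpr ⟨b.2.1, b.2.2.2⟩]
    obtain ⟨p, ⟨hfst, hrow⟩, hsnd⟩ := h
    obtain ⟨i, rfl⟩ := List.exists_eq_ofFn_of_map_snd_eq hsnd
    obtain ⟨hmono, hcont⟩ :=
      (ofFn_eq_labels_iff i m).mp (by simpa [List.map_ofFn, Function.comp_def] using hfst)
    exact ⟨⟨i, hmono, (pairwise_labelRowLE_ofFn_iff hkey hmono).mp hrow, hcont⟩⟩
  · rw [Nat.cast_eq_zero, Nat.card_eq_zero]
    refine .inl ⟨fun ⟨i, hmono, hdes, hcont⟩ =>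
      h ⟨List.ofFn fun j => (i j, w.get j), ⟨?_, ?_⟩, ?_⟩⟩
    · simpa [List.map_ofFn, Function.comp_def] using (ofFn_eq_labels_iff i m).mpr ⟨hmono, hcont⟩
    · exact (pairwise_labelRowLE_ofFn_iff hkey hmono).mpr hdes
    · simp [List.map_ofFn, Function.comp_def]

theorem sum_Qqs_DesSet_eq_of_isShuffleKey {k₁ k₂ : Letter N → ℕ} (hk₁ : IsShuffleKey k₁)
    (hk₂ : IsShuffleKey k₂) (W : Finset (List (Letter N)))
    (hW : ShuffleClosed (↑W : Set (List (Letter N)))) :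
    ∑ w ∈ W, Qqs w.length (DesSet k₁ w) = ∑ w ∈ W, Qqs w.length (DesSet k₂ w) := by
  ext m
  simp only [map_sum, MvPowerSeries.coeff_apply, Qqs, Qcoeff_DesSet_eq_ite hk₁.1,
    Qcoeff_DesSet_eq_ite hk₂.1, Finset.sum_boole]
  congr 1
  refine Finset.card_bij' (fun w _ => resortRows k₂ m w) (fun w _ => resortRows k₁ m w)
    ?_ ?_ ?_ ?_ <;> simp only [Finset.mem_filter]
  · exact fun w ⟨hw, hrow⟩ =>
      ⟨hW.mem_of_shuffleEquiv (hrow.shuffleEquiv_resortRows hk₁ hk₂) hw, hrow.resortRows hk₂.1⟩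
  · exact fun w ⟨hw, hrow⟩ =>
      ⟨hW.mem_of_shuffleEquiv (hrow.shuffleEquiv_resortRows hk₂ hk₁) hw, hrow.resortRows hk₁.1⟩
  · exact fun w ⟨_, hrow⟩ => hrow.resortRows_resortRows hk₁.1 hk₂.1
  · exact fun w ⟨_, hrow⟩ => hrow.resortRows_resortRows hk₂.1 hk₁.1

/-- For a shuffle closed (finite) set `W` of colored words, the
quasisymmetric generating functions of `W` for the big bar order and for the
natural order coincide: `Σ_{w∈W} Q_{Des_≺(w)} = Σ_{w∈W} Q_{Des_<(w)}`. -/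
theorem shuffle_closed_descent_generating_functions (N : ℕ)
    (W : Finset (List (Letter N)))
    (hW : ShuffleClosed (↑W : Set (List (Letter N)))) :
    ∑ w ∈ W, Qqs w.length (DesSet (barKey N) w) =
      ∑ w ∈ W, Qqs w.length (DesSet natKey w) :=
  sum_Qqs_DesSet_eq_of_isShuffleKey barKey_isShuffleKey natKey_isShuffleKey W hW

end NCS
end
end

section
/- Define a colored word w to be Yamanouchi of content λ if the ordinary word w^r, obtained by shuffling all barred letters of w to the right, reversing that subword of barred letters, and removing their bars, is Yamanouchi of content λ (in every final segment of w^r, each letter i occurs at least as often as i+1, and w^r has total content λ). Let CYW_{λ,d} be the set of colored Yamanouchi words of content λ with exactly d barred letters. Then Σ_{w ∈ CYW_{λ,d}} w lies in the orthogonal complement of the ideal I_Kron with respect to the bilinear form on U making colored words an orthonormal basis. -/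
open scoped BigOperators
open Classical

noncomputable section

namespace NCS

variable {N : ℕ}

/-! ### Auxiliary development for Statement 9 -/

/-- The lattice (single-suffix) condition. -/
def YLc (u : List ℕ) : Prop := ∀ i : ℕ, u.count (i + 2) ≤ u.count (i + 1)

/-- The Yamanouchi (all suffixes) condition. -/
def YLw (u : List ℕ) : Prop := ∀ t : ℕ, YLc (u.drop t)

lemma isYamOf_iff' (lam : ℕ → ℕ) (u : List ℕ) :
    IsYamOf lam u ↔ (∀ i, u.count (i + 1) = lam i) ∧ YLw u := Iff.rfl

lemma ylw_cons (x : ℕ) (u : List ℕ) : YLw (x :: u) ↔ YLc (x :: u) ∧ YLw u := by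
  constructor
  · intro h; exact ⟨h 0, fun t => by simpa using h (t + 1)⟩
  · rintro ⟨h1, h2⟩ t
    cases t with
    | zero => exact h1
    | succ t => simpa using h2 t

lemma ylc_congr {u v : List ℕ} (h : ∀ j, u.count j = v.count j) : YLc u ↔ YLc v := by
  constructor <;> intro H i
  · rw [← h (i + 2), ← h (i + 1)]; exact H i
  · rw [h (i + 2), h (i + 1)]; exact H i

lemma ylw_move {n1 n2 : List ℕ} (hcnt : ∀ j, n1.count j = n2.count j)
    (hbase : ∀ V, YLw (n1 ++ V) ↔ YLw (n2 ++ V)) :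
    ∀ (U V : List ℕ), YLw (U ++ (n1 ++ V)) ↔ YLw (U ++ (n2 ++ V)) := by
  intro U
  induction U with
  | nil => intro V; simpa using hbase V
  | cons x U ih =>
    intro V
    rw [List.cons_append, List.cons_append, ylw_cons, ylw_cons]
    have hc : ∀ j, (x :: (U ++ (n1 ++ V))).count j = (x :: (U ++ (n2 ++ V))).count j := by
      intro j; simp [List.count_cons, List.count_append, hcnt j]
    constructor
    · rintro ⟨h1, h2⟩; exact ⟨(ylc_congr hc).mp h1, (ih V).mp h2⟩
    · rintro ⟨h1, h2⟩; exact ⟨(ylc_congr hc).mpr h1, (ih V).mpr h2⟩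

lemma yamof_move {lam : ℕ → ℕ} {n1 n2 : List ℕ} (hcnt : ∀ j, n1.count j = n2.count j)
    (hbase : ∀ V, YLw (n1 ++ V) ↔ YLw (n2 ++ V)) (U V : List ℕ) :
    IsYamOf lam (U ++ (n1 ++ V)) ↔ IsYamOf lam (U ++ (n2 ++ V)) := by
  rw [isYamOf_iff', isYamOf_iff', ylw_move hcnt hbase U V]
  constructor <;> rintro ⟨h1, h2⟩ <;> refine ⟨fun i => ?_, h2⟩ <;> rw [← h1 i] <;>
    simp [List.count_append, hcnt]

lemma base_k3 {a b : ℕ} (h : a < b) (V : List ℕ) :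
    YLw ([b, b, a] ++ V) ↔ YLw ([b, a, b] ++ V) := by
  simp only [List.cons_append, List.nil_append, ylw_cons]
  constructor <;>
  · rintro ⟨h1, h2, h3, hV⟩
    have hV0 : YLc V := by simpa using hV 0
    refine ⟨fun i => ?_, fun i => ?_, fun i => ?_, hV⟩ <;>
    · have a1 := h1 i; have a2 := h2 i; have a3 := h3 i; have a4 := hV0 i
      simp only [List.count_cons, beq_iff_eq] at a1 a2 a3 ⊢
      split_ifs at a1 a2 a3 ⊢ <;> omega

lemma base_k4 {b c : ℕ} (h : b < c) (V : List ℕ) :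
    YLw ([c, b, b] ++ V) ↔ YLw ([b, c, b] ++ V) := by
  simp only [List.cons_append, List.nil_append, ylw_cons]
  constructor <;>
  · rintro ⟨h1, h2, h3, hV⟩
    have hV0 : YLc V := by simpa using hV 0
    refine ⟨fun i => ?_, fun i => ?_, fun i => ?_, hV⟩ <;>
    · have a1 := h1 i; have a2 := h2 i; have a3 := h3 i; have a4 := hV0 i
      simp only [List.count_cons, beq_iff_eq] at a1 a2 a3 ⊢
      split_ifs at a1 a2 a3 ⊢ <;> omega

lemma base_far {a c : ℕ} (h : a + 2 ≤ c) (V : List ℕ) :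
    YLw ([a, c] ++ V) ↔ YLw ([c, a] ++ V) := by
  simp only [List.cons_append, List.nil_append, ylw_cons]
  constructor <;>
  · rintro ⟨h1, h2, hV⟩
    have hV0 : YLc V := by simpa using hV 0
    refine ⟨fun i => ?_, fun i => ?_, hV⟩ <;>
    · have a1 := h1 i; have a2 := h2 i; have a4 := hV0 i
      simp only [List.count_cons, beq_iff_eq] at a1 a2 ⊢
      split_ifs at a1 a2 ⊢ <;> omega

lemma cnt3 (x y z : ℕ) : ∀ j, ([x, y, z] : List ℕ).count j = ([y, z, x] : List ℕ).count j := by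
  intro j
  simp only [List.count_cons, List.count_nil, beq_iff_eq]
  split_ifs <;> omega

lemma cnt2 (x y : ℕ) : ∀ j, ([x, y] : List ℕ).count j = ([y, x] : List ℕ).count j := by
  intro j
  simp only [List.count_cons, List.count_nil, beq_iff_eq]
  split_ifs <;> omega


/-- The unbarred letters of a colored word, de-barred (`1`-indexed). -/
def unbW (w : List (Letter N)) : List ℕ :=
  (w.filter (fun x => !x.2)).map (fun x => x.1.val + 1)

/-- The barred letters of a colored word, reversed and de-barred. -/
def brdW (w : List (Letter N)) : List ℕ :=
  ((w.filter (fun x => x.2)).reverse).map (fun x => x.1.val + 1)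

lemma cnt_swap01 (a b c : ℕ) :
    ∀ j, ([a, b, c] : List ℕ).count j = ([b, a, c] : List ℕ).count j := by
  intro j
  simp only [List.count_cons, List.count_nil, beq_iff_eq]
  split_ifs <;> omega

lemma cnt_swap12 (a b c : ℕ) :
    ∀ j, ([a, b, c] : List ℕ).count j = ([a, c, b] : List ℕ).count j := by
  intro j
  simp only [List.count_cons, List.count_nil, beq_iff_eq]
  split_ifs <;> omega

lemma cnt_swap2 (a b : ℕ) :
    ∀ j, ([a, b] : List ℕ).count j = ([b, a] : List ℕ).count j := by
  intro j
  simp only [List.count_cons, List.count_nil, beq_iff_eq]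
  split_ifs <;> omega

/-! ### The linear functional -/

/-- The linear functional pairing with the sum of colored Yamanouchi words. -/
def phiY (lam : ℕ → ℕ) (d : ℕ) : FA N →ₗ[ℤ] ℤ :=
  (Finsupp.linearCombination ℤ (fun w : FreeMonoid (Letter N) =>
    if FreeMonoid.toList w ∈ CYW N lam d then (1 : ℤ) else 0)).comp
    (MonoidAlgebra.coeffLinearEquiv ℤ).toLinearMap

lemma phiY_single (lam : ℕ → ℕ) (d : ℕ) (w : FreeMonoid (Letter N)) (c : ℤ) :
    phiY (N := N) lam d (MonoidAlgebra.single w c) =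
      if FreeMonoid.toList w ∈ CYW N lam d then c else 0 := by
  have h := Finsupp.linearCombination_single (R := ℤ)
      (v := fun w : FreeMonoid (Letter N) =>
        if FreeMonoid.toList w ∈ CYW N lam d then (1 : ℤ) else 0) c w
  have h2 : phiY (N := N) lam d (MonoidAlgebra.single w c) =
      c • (if FreeMonoid.toList w ∈ CYW N lam d then (1 : ℤ) else 0) := h
  rw [h2]
  simp [smul_eq_mul, mul_ite]

lemma phiY_wrd (lam : ℕ → ℕ) (d : ℕ) (w : List (Letter N)) :
    phiY (N := N) lam d (wrd w) = if w ∈ CYW N lam d then 1 else 0 := by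
  rw [wrd]
  rw [phiY_single]
  simp [FreeMonoid.toList_ofList]
  congr

lemma wrd_mul_wrd (u v : List (Letter N)) : wrd u * wrd v = wrd (u ++ v) := by
  rw [wrd, wrd, wrd, MonoidAlgebra.single_mul_single, FreeMonoid.ofList_append, one_mul]

end NCS
namespace NCS

variable {N : ℕ}

lemma cyw_iff_of (lam : ℕ → ℕ) (d : ℕ) {w1 w2 : List (Letter N)}
    (hpl : IsYamOf lam (plainr w1) ↔ IsYamOf lam (plainr w2))
    (hbc : barredCount w1 = barredCount w2) :
    w1 ∈ CYW N lam d ↔ w2 ∈ CYW N lam d := by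
  simp only [CYW, Set.mem_setOf_eq]
  rw [hbc]
  exact and_congr hpl Iff.rfl

lemma phiY_wrd_congr {lam : ℕ → ℕ} {d : ℕ} {w1 w2 : List (Letter N)}
    (h : w1 ∈ CYW N lam d ↔ w2 ∈ CYW N lam d) :
    phiY (N := N) lam d (wrd w1) = phiY lam d (wrd w2) := by
  rw [phiY_wrd, phiY_wrd, if_congr h rfl rfl]

/-- The unbarred/barred split of `plainr` on a three-fold concatenation. -/
lemma case_rel3 (lam : ℕ → ℕ) (d : ℕ) (x y : Letter N) (hy : y.2 = false)
    (h : natKey x < natKey y) (p s : List (Letter N)) :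
    (p ++ [y, y, x] ++ s) ∈ CYW N lam d ↔ (p ++ [y, x, y] ++ s) ∈ CYW N lam d := by
  apply cyw_iff_of
  · cases hx : x.2 with
    | true =>
      rw [show plainr (p ++ [y, y, x] ++ s) = plainr (p ++ [y, x, y] ++ s) by
        simp [plainr, List.filter_append, hy, hx]]
    | false =>
      have hab : x.1.val + 1 < y.1.val + 1 := by
        simp [natKey, hx, hy] at h; omega
      have e1 : plainr (p ++ [y, y, x] ++ s) =
          unbW p ++ ([y.1.val + 1, y.1.val + 1, x.1.val + 1] ++
            (unbW s ++ (brdW s ++ brdW p))) := by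
        simp [plainr, unbW, brdW, List.filter_append, hy, hx]
      have e2 : plainr (p ++ [y, x, y] ++ s) =
          unbW p ++ ([y.1.val + 1, x.1.val + 1, y.1.val + 1] ++
            (unbW s ++ (brdW s ++ brdW p))) := by
        simp [plainr, unbW, brdW, List.filter_append, hy, hx]
      rw [e1, e2]
      exact yamof_move
        (cnt_swap12 _ _ _) (base_k3 hab) _ _
  · cases hx : x.2 <;> simp [barredCount, List.filter_append, hy, hx]

lemma case_rel3b (lam : ℕ → ℕ) (d : ℕ) (y z : Letter N) (hy : y.2 = false)
    (h : natKey y < natKey z) (p s : List (Letter N)) :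
    (p ++ [z, y, y] ++ s) ∈ CYW N lam d ↔ (p ++ [y, z, y] ++ s) ∈ CYW N lam d := by
  apply cyw_iff_of
  · cases hz : z.2 with
    | true =>
      rw [show plainr (p ++ [z, y, y] ++ s) = plainr (p ++ [y, z, y] ++ s) by
        simp [plainr, List.filter_append, hy, hz]]
    | false =>
      have hbc : y.1.val + 1 < z.1.val + 1 := by
        simp [natKey, hy, hz] at h; omega
      have e1 : plainr (p ++ [z, y, y] ++ s) =
          unbW p ++ ([z.1.val + 1, y.1.val + 1, y.1.val + 1] ++
            (unbW s ++ (brdW s ++ brdW p))) := by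
        simp [plainr, unbW, brdW, List.filter_append, hy, hz]
      have e2 : plainr (p ++ [y, z, y] ++ s) =
          unbW p ++ ([y.1.val + 1, z.1.val + 1, y.1.val + 1] ++
            (unbW s ++ (brdW s ++ brdW p))) := by
        simp [plainr, unbW, brdW, List.filter_append, hy, hz]
      rw [e1, e2]
      exact yamof_move
        (cnt_swap01 _ _ _) (base_k4 hbc) _ _
  · cases hz : z.2 <;> simp [barredCount, List.filter_append, hy, hz]

lemma case_rel4 (lam : ℕ → ℕ) (d : ℕ) (y z : Letter N) (hy : y.2 = true)
    (h : natKey y < natKey z) (p s : List (Letter N)) :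
    (p ++ [y, y, z] ++ s) ∈ CYW N lam d ↔ (p ++ [y, z, y] ++ s) ∈ CYW N lam d := by
  apply cyw_iff_of
  · cases hz : z.2 with
    | false =>
      rw [show plainr (p ++ [y, y, z] ++ s) = plainr (p ++ [y, z, y] ++ s) by
        simp [plainr, List.filter_append, hy, hz]]
    | true =>
      have hbc : y.1.val + 1 < z.1.val + 1 := by
        simp [natKey, hy, hz] at h; omega
      have e1 : plainr (p ++ [y, y, z] ++ s) =
          (unbW p ++ (unbW s ++ brdW s)) ++
            ([z.1.val + 1, y.1.val + 1, y.1.val + 1] ++ brdW p) := by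
        simp [plainr, unbW, brdW, List.filter_append, hy, hz]
      have e2 : plainr (p ++ [y, z, y] ++ s) =
          (unbW p ++ (unbW s ++ brdW s)) ++
            ([y.1.val + 1, z.1.val + 1, y.1.val + 1] ++ brdW p) := by
        simp [plainr, unbW, brdW, List.filter_append, hy, hz]
      rw [e1, e2]
      exact yamof_move
        (cnt_swap01 _ _ _) (base_k4 hbc) _ _
  · cases hz : z.2 <;> simp [barredCount, List.filter_append, hy, hz]

lemma case_rel4b (lam : ℕ → ℕ) (d : ℕ) (x y : Letter N) (hy : y.2 = true)
    (h : natKey x < natKey y) (p s : List (Letter N)) :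
    (p ++ [x, y, y] ++ s) ∈ CYW N lam d ↔ (p ++ [y, x, y] ++ s) ∈ CYW N lam d := by
  apply cyw_iff_of
  · cases hx : x.2 with
    | false =>
      rw [show plainr (p ++ [x, y, y] ++ s) = plainr (p ++ [y, x, y] ++ s) by
        simp [plainr, List.filter_append, hy, hx]]
    | true =>
      have hab : x.1.val + 1 < y.1.val + 1 := by
        simp [natKey, hx, hy] at h; omega
      have e1 : plainr (p ++ [x, y, y] ++ s) =
          (unbW p ++ (unbW s ++ brdW s)) ++
            ([y.1.val + 1, y.1.val + 1, x.1.val + 1] ++ brdW p) := by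
        simp [plainr, unbW, brdW, List.filter_append, hy, hx]
      have e2 : plainr (p ++ [y, x, y] ++ s) =
          (unbW p ++ (unbW s ++ brdW s)) ++
            ([y.1.val + 1, x.1.val + 1, y.1.val + 1] ++ brdW p) := by
        simp [plainr, unbW, brdW, List.filter_append, hy, hx]
      rw [e1, e2]
      exact yamof_move
        (cnt_swap12 _ _ _) (base_k3 hab) _ _
  · cases hx : x.2 <;> simp [barredCount, List.filter_append, hy, hx]

lemma case_far (lam : ℕ → ℕ) (d : ℕ) (x z : Letter N)
    (h : natKey x + 2 < natKey z) (p s : List (Letter N)) :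
    (p ++ [x, z] ++ s) ∈ CYW N lam d ↔ (p ++ [z, x] ++ s) ∈ CYW N lam d := by
  apply cyw_iff_of
  · cases hx : x.2 with
    | false =>
      cases hz : z.2 with
      | true =>
        rw [show plainr (p ++ [x, z] ++ s) = plainr (p ++ [z, x] ++ s) by
          simp [plainr, List.filter_append, hx, hz]]
      | false =>
        have hac : x.1.val + 1 + 2 ≤ z.1.val + 1 := by
          simp [natKey, hx, hz] at h; omega
        have e1 : plainr (p ++ [x, z] ++ s) =
            unbW p ++ ([x.1.val + 1, z.1.val + 1] ++ (unbW s ++ (brdW s ++ brdW p))) := by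
          simp [plainr, unbW, brdW, List.filter_append, hx, hz]
        have e2 : plainr (p ++ [z, x] ++ s) =
            unbW p ++ ([z.1.val + 1, x.1.val + 1] ++ (unbW s ++ (brdW s ++ brdW p))) := by
          simp [plainr, unbW, brdW, List.filter_append, hx, hz]
        rw [e1, e2]
        exact yamof_move (cnt_swap2 _ _) (base_far hac) _ _
    | true =>
      cases hz : z.2 with
      | false =>
        rw [show plainr (p ++ [x, z] ++ s) = plainr (p ++ [z, x] ++ s) by
          simp [plainr, List.filter_append, hx, hz]]
      | true =>
        have hac : x.1.val + 1 + 2 ≤ z.1.val + 1 := by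
          simp [natKey, hx, hz] at h; omega
        have e1 : plainr (p ++ [x, z] ++ s) =
            (unbW p ++ (unbW s ++ brdW s)) ++
              ([z.1.val + 1, x.1.val + 1] ++ brdW p) := by
          simp [plainr, unbW, brdW, List.filter_append, hx, hz]
        have e2 : plainr (p ++ [z, x] ++ s) =
            (unbW p ++ (unbW s ++ brdW s)) ++
              ([x.1.val + 1, z.1.val + 1] ++ brdW p) := by
          simp [plainr, unbW, brdW, List.filter_append, hx, hz]
        rw [e1, e2]
        exact (yamof_move (cnt_swap2 _ _) (base_far hac) _ _).symm
  · cases hx : x.2 <;> cases hz : z.2 <;> simp [barredCount, List.filter_append, hx, hz]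

lemma case_rot (lam : ℕ → ℕ) (d : ℕ) (x y z : Letter N)
    (h1 : natKey x + 1 = natKey y) (h2 : natKey y + 1 = natKey z) (p s : List (Letter N)) :
    ((p ++ [x, z, y] ++ s) ∈ CYW N lam d ↔ (p ++ [y, x, z] ++ s) ∈ CYW N lam d) ∧
    ((p ++ [z, x, y] ++ s) ∈ CYW N lam d ↔ (p ++ [y, z, x] ++ s) ∈ CYW N lam d) := by
  constructor <;>
  · apply cyw_iff_of
    · cases hx : x.2 <;> cases hy : y.2 <;> cases hz : z.2 <;>
        first
        | (exfalso; simp [natKey, hx, hy, hz] at h1 h2; omega)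
        | (exact iff_of_eq (congrArg (IsYamOf lam)
            (by simp [plainr, List.filter_append, hx, hy, hz])))
    · cases hx : x.2 <;> cases hy : y.2 <;> cases hz : z.2 <;>
        first
        | (exfalso; simp [natKey, hx, hy, hz] at h1 h2; omega)
        | simp [barredCount, List.filter_append, hx, hy, hz]

end NCS
namespace NCS

variable {N : ℕ}

lemma kron_case {a b : FA N} (h : kronRel N a b) (lam : ℕ → ℕ) (d : ℕ)
    (p s : List (Letter N)) :
    phiY (N := N) lam d (wrd p * a * wrd s) = phiY lam d (wrd p * b * wrd s) := by
  cases h with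
  | rel3 x y hy hlt =>
    rw [wrd_mul_wrd, wrd_mul_wrd, wrd_mul_wrd, wrd_mul_wrd]
    exact phiY_wrd_congr (case_rel3 lam d x y hy hlt p s)
  | rel3b y z hy hlt =>
    rw [wrd_mul_wrd, wrd_mul_wrd, wrd_mul_wrd, wrd_mul_wrd]
    exact phiY_wrd_congr (case_rel3b lam d y z hy hlt p s)
  | rel4 y z hy hlt =>
    rw [wrd_mul_wrd, wrd_mul_wrd, wrd_mul_wrd, wrd_mul_wrd]
    exact phiY_wrd_congr (case_rel4 lam d y z hy hlt p s)
  | rel4b x y hy hlt =>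
    rw [wrd_mul_wrd, wrd_mul_wrd, wrd_mul_wrd, wrd_mul_wrd]
    exact phiY_wrd_congr (case_rel4b lam d x y hy hlt p s)
  | far x z hlt =>
    rw [wrd_mul_wrd, wrd_mul_wrd, wrd_mul_wrd, wrd_mul_wrd]
    exact phiY_wrd_congr (case_far lam d x z hlt p s)
  | rot x y z h1 h2 =>
    obtain ⟨e1, e2⟩ := case_rot lam d x y z h1 h2 p s
    simp only [sub_mul, mul_sub, map_sub, wrd_mul_wrd]
    rw [phiY_wrd_congr e1, phiY_wrd_congr e2]

lemma single_eq_smul_wrd (g : FreeMonoid (Letter N)) (c : ℤ) :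
    (MonoidAlgebra.single g c : FA N) = c • wrd (FreeMonoid.toList g) := by
  rw [wrd, FreeMonoid.ofList_toList, MonoidAlgebra.smul_single', mul_one]

lemma phi_mul_congr (lam : ℕ → ℕ) (d : ℕ) {a b : FA N}
    (H : ∀ p s : List (Letter N),
      phiY (N := N) lam d (wrd p * a * wrd s) = phiY lam d (wrd p * b * wrd s)) :
    ∀ u v : FA N, phiY (N := N) lam d (u * a * v) = phiY lam d (u * b * v) := by
  have key : ∀ (p : List (Letter N)) (v : FA N),
      phiY (N := N) lam d (wrd p * a * v) = phiY lam d (wrd p * b * v) := by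
    intro p v
    induction v using MonoidAlgebra.induction_linear with
    | zero => simp
    | add f g hf hg => simp only [mul_add, map_add, hf, hg]
    | single g c =>
      rw [single_eq_smul_wrd]
      simp only [mul_smul_comm, map_smul]
      rw [H p (FreeMonoid.toList g)]
  intro u v
  induction u using MonoidAlgebra.induction_linear with
  | zero => simp
  | add f g hf hg => simp only [add_mul, map_add, hf, hg]
  | single g c =>
    rw [single_eq_smul_wrd]
    simp only [smul_mul_assoc, map_smul]
    rw [key (FreeMonoid.toList g) v]

lemma rel_phi (lam : ℕ → ℕ) (d : ℕ) :
    ∀ {a b : FA N}, RingQuot.Rel (kronRel N) a b →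
      ∀ u v : FA N, phiY (N := N) lam d (u * a * v) = phiY lam d (u * b * v) := by
  intro a b h
  induction h with
  | of hr => exact phi_mul_congr lam d (fun p s => kron_case hr lam d p s)
  | @add_left a b c _ ih =>
    intro u v
    simp only [mul_add, add_mul, map_add, ih u v]
  | @mul_left a b c _ ih =>
    intro u v
    have h' := ih u (c * v)
    simp only [mul_assoc] at h' ⊢
    exact h'
  | @mul_right a b c _ ih =>
    intro u v
    have h' := ih (u * a) v
    simp only [mul_assoc] at h' ⊢
    exact h'

end NCS
namespace NCS

/-- `Σ_{w ∈ CYW_{λ,d}} w` lies in `(I_Kron)^⊥`: it pairs to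
zero with every element of the ideal `I_Kron` (the kernel of the quotient map). -/
theorem CYW_in_kron_perp (N : ℕ) (lam : ℕ → ℕ) (d : ℕ) (f : FA N)
    (hf : RingQuot.mkRingHom (kronRel N) f = 0) :
    ∑ w ∈ f.coeff.support.filter (fun w => FreeMonoid.toList w ∈ CYW N lam d), f.coeff w = 0 := by
  classical
  -- the quotient classes of `f` and `0` agree
  have hq : Quot.mk (RingQuot.Rel (kronRel N)) f = Quot.mk (RingQuot.Rel (kronRel N)) 0 := by
    have h0 : RingQuot.mkRingHom (kronRel N) f = RingQuot.mkRingHom (kronRel N) 0 := by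
      rw [map_zero]; exact hf
    simp only [RingQuot.mkRingHom_def, RingHom.coe_mk, MonoidHom.coe_mk, OneHom.coe_mk] at h0
    exact congrArg RingQuot.toQuot h0
  -- `phiY` respects the quotient relation
  have hresp : ∀ a b : FA N, RingQuot.Rel (kronRel N) a b →
      phiY (N := N) lam d a = phiY lam d b := by
    intro a b h
    have h' := rel_phi lam d h 1 1
    simpa using h'
  have hphi0 : phiY (N := N) lam d f = 0 := by
    have h1 : phiY (N := N) lam d f = phiY lam d 0 :=
      congrArg (Quot.lift (fun g : FA N => phiY (N := N) lam d g) hresp) hq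
    simpa using h1
  -- identify the sum with `phiY f`
  have happ : phiY (N := N) lam d f =
      f.coeff.sum fun w c => c • (if FreeMonoid.toList w ∈ CYW N lam d then (1 : ℤ) else 0) :=
    Finsupp.linearCombination_apply ℤ f.coeff
  rw [Finsupp.sum] at happ
  rw [← hphi0, happ, Finset.sum_filter]
  apply Finset.sum_congr rfl
  intro w _
  by_cases hw : FreeMonoid.toList w ∈ CYW N lam d <;> simp [hw]

end NCS
end
end

section
/- Let m ∈ [N−1] and x = m+1 (an unbarred letter). For a weak composition α = (a, a) (two equal parts) and flags (m̄, m̄), the noncommutative column-flagged super Schur function satisfies J_{(a,a)}(m̄ |x| m̄) = x · J_{(a,a)}(m̄, m̄) in U/I_Kron, where J_{(a,a)}(m̄ |x| m̄) = Σ_{π ∈ S_2} sgn(π) e_{a+π(1)−1}(A_{≤m̄}) · x · e_{a+π(2)−2}(A_{≤m̄}) and J_{(a,a)}(m̄, m̄) is the same sum without the inserted letter x. -/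
open scoped BigOperators
open Classical

noncomputable section

/-!
Write `e_k` for the image of `e_k(A_{<j})` in `U/I_Kron`. Adjoining the letter `c` with
`natKey c = j` gives `e_k(A_{<j+1}) = e_k(A_{<j}) + c e_{k-1}(A_{<j})` when `c` is unbarred and
`e_k(A_{<j+1}) = e_k(A_{<j}) + c e_{k-1}(A_{<j+1})` when `c` is barred. Induction on `j`, using
the relations of `I_Kron`, shows that the `e_k(A_{<j})` commute pairwise and that every letter
`w` with `natKey w ≥ j` satisfies `[w, e_k] = [w, e_1] e_{k-1}`. For `w = x` this rewrites
`e_a x e_a - e_{a+1} x e_{a-1}` as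
`x (e_a e_a - e_{a+1} e_{a-1}) - [x, e_1] (e_{a-1} e_a - e_a e_{a-1})`,
and the last term vanishes.
-/

namespace NCS

section RingSequences

variable {R : Type*} [Ring R] {c V w x : R} {E F : ℤ → R}

lemma lie_add_mul (a b : R) : ⁅w, a + c * b⁆ = ⁅w, a⁆ + ⁅w, c⁆ * b + c * ⁅w, b⁆ := by
  simp only [Ring.lie_def]; noncomm_ring

lemma mul_eq_sub_of_lie_eq {y z : R} (h : ⁅x, y⁆ = z) : y * x = x * y - z := by
  rw [← h, Ring.lie_def, sub_sub_cancel]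

theorem two_column_insert_of_lie_eq (hx : ∀ k, ⁅x, E k⁆ = V * E (k - 1))
    (a : ℤ) (hcomm : Commute (E (a - 1)) (E a)) :
    E a * x * E a - E (a + 1) * x * E (a - 1) = x * (E a * E a - E (a + 1) * E (a - 1)) := by
  rw [mul_eq_sub_of_lie_eq (hx a), mul_eq_sub_of_lie_eq (hx (a + 1)), add_sub_cancel_right]
  simp only [sub_mul, mul_sub, mul_assoc, hcomm.eq]
  abel

theorem commute_of_unbarred_recursion
    (hF : ∀ k, F k = E k + c * E (k - 1)) (hE : ∀ k l, Commute (E k) (E l))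
    (hEc : ∀ k, ⁅c, E k⁆ = V * E (k - 1)) (hcV : c * V = 0) (k l : ℤ) :
    Commute (F k) (F l) := by
  have expand : ∀ a b, F a * F b = E a * E b + c * (E a * E (b - 1) + E (a - 1) * E b)
      + c * c * (E (a - 1) * E (b - 1)) - V * (E (a - 1) * E (b - 1)) := by
    intro a b
    calc F a * F b
        = E a * E b + E a * c * E (b - 1) + c * (E (a - 1) * E b)
          + c * (E (a - 1) * c * E (b - 1)) := by rw [hF, hF]; noncomm_ring
      _ = _ := by
        rw [mul_eq_sub_of_lie_eq (hEc a), mul_eq_sub_of_lie_eq (hEc (a - 1))]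
        simp only [sub_mul, mul_sub, mul_add, ← mul_assoc, hcV, zero_mul, sub_zero]
        abel
  rw [Commute, SemiconjBy, expand, expand, (hE k l).eq, (hE k (l - 1)).eq, (hE (k - 1) l).eq,
    (hE (k - 1) (l - 1)).eq, add_comm (E (l - 1) * E k)]

theorem lie_of_unbarred_recursion (hE0 : E 0 = 1)
    (hF : ∀ k, F k = E k + c * E (k - 1)) (hw : ∀ k, ⁅w, E k⁆ = ⁅w, E 1⁆ * E (k - 1))
    (hZc : Commute ⁅w, E 1⁆ c) (hWc : ⁅w, c⁆ * c = 0) (k : ℤ) :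
    ⁅w, F k⁆ = ⁅w, F 1⁆ * F (k - 1) := by
  rw [hF 1, sub_self, hE0, lie_add_mul, (Commute.one_right w).lie_eq, mul_one, mul_zero, add_zero,
    hF k, hF (k - 1), lie_add_mul, hw k, hw (k - 1)]
  simp only [add_mul, mul_add, ← mul_assoc, hZc.eq, hWc, add_zero]

theorem lie_of_barred_recursion (hE0 : E 0 = 1)
    (hFneg : ∀ k < 0, F k = 0) (hF : ∀ k, F k = E k + c * F (k - 1))
    (hw : ∀ k, ⁅w, E k⁆ = ⁅w, E 1⁆ * E (k - 1))
    (hZc : Commute ⁅w, E 1⁆ c) (hcW : c * ⁅w, c⁆ = 0) (k : ℤ) :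
    ⁅w, F k⁆ = ⁅w, F 1⁆ * F (k - 1) := by
  have hF0 : F 0 = 1 := by rw [hF, hE0, hFneg (0 - 1) (by norm_num), mul_zero, add_zero]
  have hF1 : ⁅w, F 1⁆ = ⁅w, E 1⁆ + ⁅w, c⁆ := by
    rw [hF 1, sub_self, lie_add_mul, hF0, (Commute.one_right w).lie_eq, mul_one, mul_zero,
      add_zero]
  rw [hF1]
  induction k using Int.induction_on with
  | zero => rw [hF0, (Commute.one_right w).lie_eq, hFneg _ (by norm_num), mul_zero]
  | succ i ih =>
    rw [hF, lie_add_mul, hw, add_sub_cancel_right, ← hF1, ih, hF1, hF i]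
    simp only [add_mul, mul_add, ← mul_assoc, hZc.eq, hcW, zero_mul, add_zero]
    abel
  | pred i _ =>
    rw [hFneg _ (by omega), hFneg _ (by omega), Ring.lie_def, mul_zero, zero_mul, sub_self,
      mul_zero]


lemma cross_eq_of_barred_recursion (hF : ∀ k, F k = E k + c * F (k - 1))
    (hE : ∀ k l, Commute (E k) (E l)) (hEc : ∀ k, ⁅c, E k⁆ = V * E (k - 1)) (a b : ℤ) :
    E a * F b - E b * F a = c * (E a * F (b - 1) - E b * F (a - 1))
      - V * (E (a - 1) * F (b - 1) - E (b - 1) * F (a - 1)) :=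
  calc E a * F b - E b * F a
      = E a * E b - E b * E a + E a * c * F (b - 1) - E b * c * F (a - 1) := by
        rw [hF a, hF b]; noncomm_ring
    _ = _ := by
        rw [(hE a b).eq, mul_eq_sub_of_lie_eq (hEc a), mul_eq_sub_of_lie_eq (hEc b)]
        noncomm_ring

lemma mul_cross_eq_zero_of_barred_recursion (hEneg : ∀ k < 0, E k = 0)
    (hFneg : ∀ k < 0, F k = 0) (hF : ∀ k, F k = E k + c * F (k - 1))
    (hE : ∀ k l, Commute (E k) (E l)) (hEc : ∀ k, ⁅c, E k⁆ = V * E (k - 1)) (hVc : V * c = 0)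
    {X : R} (hX : X * c = 0) (a b : ℤ) : X * (E a * F b - E b * F a) = 0 := by
  suffices ∀ n : ℕ, ∀ a b : ℤ, a < n → ∀ X, X * c = 0 → X * (E a * F b - E b * F a) = 0 from
    this (a.toNat + 1) a b (by omega) X hX
  intro n
  induction n with
  | zero =>
    intro a b ha X _
    rw [hEneg a (by omega), hFneg a (by omega), zero_mul, mul_zero, sub_self, mul_zero]
  | succ n ih =>
    intro a b ha X hX
    have hXV : X * V * c = 0 := by rw [mul_assoc, hVc, mul_zero]
    rw [cross_eq_of_barred_recursion hF hE hEc, mul_sub, ← mul_assoc, hX, zero_mul, ← mul_assoc,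
      ih (a - 1) (b - 1) (by omega) _ hXV, sub_zero]

theorem commute_of_barred_recursion (hEneg : ∀ k < 0, E k = 0)
    (hFneg : ∀ k < 0, F k = 0) (hF : ∀ k, F k = E k + c * F (k - 1))
    (hE : ∀ k l, Commute (E k) (E l)) (hEc : ∀ k, ⁅c, E k⁆ = V * E (k - 1)) (hVc : V * c = 0)
    (k l : ℤ) : Commute (F k) (F l) := by
  have cross : ∀ a b, E a * F b + c * (E b * F (a - 1)) = c * (E a * F (b - 1)) + E b * F a := by
    intro a b
    rw [← sub_eq_sub_iff_add_eq_add, ← mul_sub, cross_eq_of_barred_recursion hF hE hEc,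
      mul_cross_eq_zero_of_barred_recursion hEneg hFneg hF hE hEc hVc hVc, sub_zero]
  have peel : ∀ a b, F a * F b = E a * F b + c * (F (a - 1) * F b) := by
    intro a b; rw [hF a, add_mul, mul_assoc]
  suffices ∀ n : ℕ, ∀ a b : ℤ, a + b < n → Commute (F a) (F b) from
    this (k + l + 1).toNat k l (by omega)
  intro n
  induction n with
  | zero =>
    intro a b hab
    rcases lt_or_ge a 0 with ha | ha
    · rw [hFneg a ha]; exact Commute.zero_left _
    · rw [hFneg b (by omega)]; exact Commute.zero_right _
  | succ n ih =>
    intro a b hab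
    have expand : ∀ a b : ℤ, a + b < n + 1 →
        F a * F b = E a * F b + c * (E b * F (a - 1)) + c * c * (F (b - 1) * F (a - 1)) := by
      intro a b hab
      rw [peel, (ih (a - 1) b (by omega)).eq, peel]
      noncomm_ring
    rw [Commute, SemiconjBy, expand a b hab, expand b a (by omega),
      (ih (b - 1) (a - 1) (by omega)).eq, cross, add_comm (c * _)]

end RingSequences

variable {N : ℕ}

section Elementary

variable (key : Letter N → ℕ)

lemma colGE_trans {x y z : Letter N} (hxy : colGE key x y) (hyz : colGE key y z) :
    colGE key x z := by
  rcases hxy with hxy | ⟨rfl, hx⟩ <;> rcases hyz with hyz | ⟨rfl, hy⟩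
  · exact Or.inl (hyz.trans hxy)
  · exact Or.inl hxy
  · exact Or.inl hyz
  · exact Or.inr ⟨rfl, hx⟩

lemma eSet_eq_sum_ite (S : Set (Letter N)) (k : ℕ) :
    eSet key S k = ∑ f : Fin k → Letter N,
      if (∀ x ∈ List.ofFn f, x ∈ S) ∧ (List.ofFn f).Pairwise (colGE key)
      then wrd (List.ofFn f) else 0 := by
  have : Trans (colGE key) (colGE key) (colGE key) := ⟨colGE_trans key⟩
  rw [eSet, Finset.sum_filter]
  refine Finset.sum_congr rfl fun f _ => if_congr ?_ rfl rfl
  rw [List.forall_mem_ofFn_iff, ← List.isChain_iff_pairwise, List.isChain_ofFn]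
  refine and_congr_right' ⟨fun h i hi => h _ _ rfl, ?_⟩
  rintro h ⟨i, hi⟩ ⟨_, hj⟩ rfl
  exact h i hj

lemma wrd_cons (t : Letter N) (l : List (Letter N)) : wrd (t :: l) = wrd [t] * wrd l := by
  rw [wrd, wrd, wrd, MonoidAlgebra.single_mul_single, one_mul]; rfl

lemma eSet_zero (S : Set (Letter N)) : eSet key S 0 = 1 := by
  rw [eSet_eq_sum_ite, Fintype.sum_unique, if_pos (by simp)]; rfl

lemma eSet_succ (S : Set (Letter N)) (k : ℕ) :
    eSet key S (k + 1) = ∑ t : Letter N,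
      if t ∈ S then wrd [t] * eSet key {y | y ∈ S ∧ colGE key t y} k else 0 := by
  rw [eSet_eq_sum_ite, ← (Fin.consEquiv fun _ => Letter N).sum_comp, Fintype.sum_prod_type]
  refine Finset.sum_congr rfl fun t _ => ?_
  split_ifs with ht
  · rw [eSet_eq_sum_ite, Finset.mul_sum]
    refine Finset.sum_congr rfl fun g _ => ?_
    have hcons : List.ofFn ((Fin.consEquiv fun _ => Letter N) (t, g)) = t :: List.ofFn g :=
      List.ofFn_cons t g
    rw [hcons, mul_ite, mul_zero, ← wrd_cons]
    congr 1
    simp only [List.forall_mem_cons, List.pairwise_cons, Set.mem_ofPred_eq, forall_and,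
      eq_iff_iff]
    tauto
  · refine Finset.sum_eq_zero fun g _ => if_neg ?_
    simp [ht]

end Elementary

lemma natKey_injective : Function.Injective (natKey : Letter N → ℕ) := by
  rintro ⟨⟨i, hi⟩, b⟩ ⟨⟨i', hi'⟩, b'⟩ h
  simp only [natKey] at h
  cases b <;> cases b' <;> simp_all <;> omega

lemma natKey_le_of_colGE {t y : Letter N} (h : colGE natKey t y) : natKey y ≤ natKey t := by
  rcases h with h | ⟨rfl, -⟩
  exacts [h.le, le_rfl]

/-- `A_{<j}`; the paper's flag `A_{≤m̄}` is `lettersBelow N (2 * m + 2)`. -/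
def lettersBelow (N j : ℕ) : Set (Letter N) := {y | natKey y < j}

lemma setOf_colGE_lettersBelow {j : ℕ} {c : Letter N} (hc : natKey c = j) :
    {y | y ∈ lettersBelow N (j + 1) ∧ colGE natKey c y} =
      lettersBelow N (if c.2 then j + 1 else j) := by
  ext y
  simp only [lettersBelow, colGE, Set.mem_ofPred_eq]
  have hyc : natKey y = j → y = c := fun h => natKey_injective (h.trans hc.symm)
  cases c.2 <;> grind

lemma eSet_lettersBelow_succ {j : ℕ} {c : Letter N} (hc : natKey c = j) (k : ℕ) :
    eSet natKey (lettersBelow N (j + 1)) (k + 1) = eSet natKey (lettersBelow N j) (k + 1)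
      + wrd [c] * eSet natKey (lettersBelow N (if c.2 then j + 1 else j)) k := by
  rw [eSet_succ, eSet_succ, ← setOf_colGE_lettersBelow hc,
    ← Finset.sum_ite_eq_of_mem' Finset.univ c
      (fun t => wrd [t] * eSet natKey {y | y ∈ lettersBelow N (j + 1) ∧ colGE natKey t y} k)
      (Finset.mem_univ c), ← Finset.sum_add_distrib]
  refine Finset.sum_congr rfl fun t _ => ?_
  have mem : ∀ {i}, t ∈ lettersBelow N i ↔ natKey t < i := Iff.rfl
  rcases lt_trichotomy (natKey t) j with h | h | h
  · have hset : {y | y ∈ lettersBelow N (j + 1) ∧ colGE natKey t y}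
        = {y | y ∈ lettersBelow N j ∧ colGE natKey t y} := by
      ext y
      simp only [lettersBelow, Set.mem_ofPred_eq]
      constructor <;> rintro ⟨-, hy⟩ <;> exact ⟨by have := natKey_le_of_colGE hy; omega, hy⟩
    rw [if_pos (mem.2 (by omega)), if_pos (mem.2 h), if_neg (by rintro rfl; omega), add_zero,
      hset]
  · obtain rfl : t = c := natKey_injective (h.trans hc.symm)
    rw [if_pos (mem.2 (by omega)), if_neg (mem.not.2 (by omega)), if_pos rfl, zero_add]
  · rw [if_neg (mem.not.2 (by omega)), if_neg (mem.not.2 (by omega)),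
      if_neg (by rintro rfl; omega), add_zero]

section IntegerIndex

variable (key : Letter N → ℕ) (S : Set (Letter N))

lemma eSetZ_of_neg {k : ℤ} (hk : k < 0) : eSetZ key S k = 0 := if_neg (by omega)

lemma eSetZ_natCast (k : ℕ) : eSetZ key S k = eSet key S k := by
  rw [eSetZ, if_pos (Int.natCast_nonneg k), Int.toNat_natCast]

lemma eSetZ_zero : eSetZ key S 0 = 1 := by
  rw [← Nat.cast_zero, eSetZ_natCast, eSet_zero]

end IntegerIndex

lemma eSetZ_lettersBelow_succ {j : ℕ} {c : Letter N} (hc : natKey c = j) (k : ℤ) :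
    eSetZ natKey (lettersBelow N (j + 1)) k = eSetZ natKey (lettersBelow N j) k
      + wrd [c] * eSetZ natKey (lettersBelow N (if c.2 then j + 1 else j)) (k - 1) := by
  rcases lt_or_ge k 0 with hk | hk
  · simp only [eSetZ_of_neg _ _ hk, eSetZ_of_neg _ _ (show k - 1 < 0 by omega), mul_zero,
      add_zero]
  lift k to ℕ using hk
  cases k with
  | zero => rw [Nat.cast_zero, eSetZ_zero, eSetZ_zero, eSetZ_of_neg _ _ (by norm_num), mul_zero,
      add_zero]
  | succ k =>
    rw [show ((k + 1 : ℕ) : ℤ) - 1 = k by omega, eSetZ_natCast, eSetZ_natCast, eSetZ_natCast,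
      eSet_lettersBelow_succ hc]

def kronLetter (t : Letter N) : RingQuot (kronRel N) := RingQuot.mkRingHom (kronRel N) (wrd [t])

def kronE (N j : ℕ) (k : ℤ) : RingQuot (kronRel N) :=
  RingQuot.mkRingHom (kronRel N) (eSetZ natKey (lettersBelow N j) k)

lemma kronE_of_neg {j : ℕ} {k : ℤ} (hk : k < 0) : kronE N j k = 0 := by
  rw [kronE, eSetZ_of_neg _ _ hk, map_zero]

lemma kronE_zero (j : ℕ) : kronE N j 0 = 1 := by
  rw [kronE, eSetZ_zero, map_one]

lemma kronE_succ {j : ℕ} {c : Letter N} (hc : natKey c = j) (k : ℤ) :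
    kronE N (j + 1) k
      = kronE N j k + kronLetter c * kronE N (if c.2 then j + 1 else j) (k - 1) := by
  rw [kronE, eSetZ_lettersBelow_succ hc, map_add, map_mul]; rfl

lemma kronE_one (j : ℕ) :
    kronE N j 1 = ∑ t ∈ Finset.univ.filter (fun t : Letter N => natKey t < j), kronLetter t := by
  rw [kronE, ← Nat.cast_one, eSetZ_natCast, eSet_succ, map_sum, Finset.sum_filter]
  refine Finset.sum_congr rfl fun t _ => ?_
  rw [apply_ite (RingQuot.mkRingHom (kronRel N)), eSet_zero, mul_one, map_zero]
  exact if_congr Iff.rfl rfl rfl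

lemma kronE_zero_left {k : ℤ} (hk : k ≠ 0) : kronE N 0 k = 0 := by
  rcases lt_or_gt_of_ne hk with hk | hk
  · exact kronE_of_neg hk
  obtain ⟨k, rfl⟩ : ∃ n : ℕ, k = n + 1 := ⟨k.toNat - 1, by omega⟩
  rw [kronE, ← Nat.cast_succ, eSetZ_natCast, eSet_succ, Finset.sum_eq_zero, map_zero]
  exact fun t _ => if_neg (Nat.not_lt_zero _)

lemma lie_kronE_one (x : RingQuot (kronRel N)) (j : ℕ) :
    ⁅x, kronE N j 1⁆ = ∑ t ∈ Finset.univ.filter (fun t : Letter N => natKey t < j),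
      ⁅x, kronLetter t⁆ := by
  simp only [kronE_one, Ring.lie_def, Finset.mul_sum, Finset.sum_mul, Finset.sum_sub_distrib]

lemma mk_wrd_pair (s t : Letter N) :
    RingQuot.mkRingHom (kronRel N) (wrd [s, t]) = kronLetter s * kronLetter t := by
  rw [wrd_cons, map_mul]; rfl

lemma mk_wrd_triple (s t r : Letter N) :
    RingQuot.mkRingHom (kronRel N) (wrd [s, t, r])
      = kronLetter s * kronLetter t * kronLetter r := by
  rw [wrd_cons, map_mul, mk_wrd_pair, mul_assoc]; rfl

lemma commute_kronLetter_of_far {s t : Letter N} (h : natKey s + 2 < natKey t) :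
    Commute (kronLetter s) (kronLetter t) := by
  rw [Commute, SemiconjBy, ← mk_wrd_pair, ← mk_wrd_pair]
  exact RingQuot.mkRingHom_rel (kronRel.far s t h)

lemma lie_mul_kronLetter_of_unbarred {c w : Letter N} (hb : c.2 = false)
    (h : natKey c < natKey w) : ⁅kronLetter w, kronLetter c⁆ * kronLetter c = 0 := by
  rw [Ring.lie_def, sub_mul, sub_eq_zero, ← mk_wrd_triple, ← mk_wrd_triple]
  exact RingQuot.mkRingHom_rel (kronRel.rel3b c w hb h)

lemma kronLetter_mul_lie_of_barred {c w : Letter N} (hb : c.2 = true)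
    (h : natKey c < natKey w) : kronLetter c * ⁅kronLetter w, kronLetter c⁆ = 0 := by
  rw [Ring.lie_def, mul_sub, sub_eq_zero, ← mul_assoc, ← mul_assoc, ← mk_wrd_triple,
    ← mk_wrd_triple]
  exact (RingQuot.mkRingHom_rel (kronRel.rel4 c w hb h)).symm

lemma kronLetter_mul_lie_kronE_one_of_unbarred {j : ℕ} {c : Letter N} (hb : c.2 = false)
    (hc : natKey c = j) : kronLetter c * ⁅kronLetter c, kronE N j 1⁆ = 0 := by
  rw [lie_kronE_one, Finset.mul_sum]
  refine Finset.sum_eq_zero fun t ht => ?_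
  rw [Ring.lie_def, mul_sub, sub_eq_zero, ← mul_assoc, ← mul_assoc, ← mk_wrd_triple,
    ← mk_wrd_triple]
  exact RingQuot.mkRingHom_rel (kronRel.rel3 t c hb (by grind))

lemma lie_kronE_one_mul_kronLetter_of_barred {j : ℕ} {c : Letter N} (hb : c.2 = true)
    (hc : natKey c = j) : ⁅kronLetter c, kronE N j 1⁆ * kronLetter c = 0 := by
  rw [lie_kronE_one, Finset.sum_mul]
  refine Finset.sum_eq_zero fun t ht => ?_
  rw [Ring.lie_def, sub_mul, sub_eq_zero, ← mk_wrd_triple, ← mk_wrd_triple]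
  exact (RingQuot.mkRingHom_rel (kronRel.rel4b t c hb (by grind))).symm

/-- The terms with `natKey t + 2 = natKey w` commute with `c` by the rotation relation of
`I_Kron`; all other terms vanish by far commutation. -/
lemma commute_lie_kronE_one {j : ℕ} {c w : Letter N} (hc : natKey c = j) (hw : j < natKey w) :
    Commute ⁅kronLetter w, kronE N j 1⁆ (kronLetter c) := by
  rw [lie_kronE_one]
  refine Commute.sum_left _ _ _ fun t ht => ?_
  have ht : natKey t < j := (Finset.mem_filter.1 ht).2
  by_cases hfar : natKey t + 2 < natKey w
  · rw [(commute_kronLetter_of_far hfar).symm.lie_eq]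
    exact Commute.zero_left _
  have hrot := RingQuot.mkRingHom_rel (kronRel.rot t c w (by omega) (by omega))
  simp only [map_sub, mk_wrd_triple] at hrot
  rw [Commute, SemiconjBy, Ring.lie_def, sub_mul, mul_sub, ← mul_assoc, ← mul_assoc, ← neg_sub,
    hrot, neg_sub]

theorem kronE_commute_and_lie (j : ℕ) :
    (∀ k l, Commute (kronE N j k) (kronE N j l)) ∧
      ∀ w : Letter N, j ≤ natKey w →
        ∀ k, ⁅kronLetter w, kronE N j k⁆ = ⁅kronLetter w, kronE N j 1⁆ * kronE N j (k - 1) := by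
  induction j with
  | zero =>
    have central : ∀ k x, Commute (kronE N 0 k) x := by
      intro k x
      by_cases hk : k = 0
      · rw [hk, kronE_zero]; exact Commute.one_left x
      · rw [kronE_zero_left hk]; exact Commute.zero_left x
    refine ⟨fun k l => central k _, fun w _ k => ?_⟩
    rw [(central k _).symm.lie_eq, (central 1 _).symm.lie_eq, zero_mul]
  | succ j ih =>
    obtain ⟨hE, hlie⟩ := ih
    by_cases hj : ∃ c : Letter N, natKey c = j
    swap
    · have hsame : ∀ k, kronE N (j + 1) k = kronE N j k := by
        intro k
        rw [kronE, kronE, lettersBelow, lettersBelow]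
        congr 3
        ext y
        grind
      simp only [hsame]
      exact ⟨hE, fun w hw => hlie w (by omega)⟩
    obtain ⟨c, hc⟩ := hj
    have hcE := hlie c hc.ge
    cases hb : c.2
    · have hF : ∀ k, kronE N (j + 1) k = kronE N j k + kronLetter c * kronE N j (k - 1) := by
        simpa [hb] using kronE_succ hc
      exact ⟨commute_of_unbarred_recursion hF hE hcE
          (kronLetter_mul_lie_kronE_one_of_unbarred hb hc),
        fun w hw => lie_of_unbarred_recursion (kronE_zero j) hF (hlie w (by omega))
          (commute_lie_kronE_one hc (by omega)) (lie_mul_kronLetter_of_unbarred hb (by omega))⟩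
    · have hF : ∀ k,
          kronE N (j + 1) k = kronE N j k + kronLetter c * kronE N (j + 1) (k - 1) := by
        simpa [hb] using kronE_succ hc
      exact ⟨commute_of_barred_recursion (fun _ => kronE_of_neg) (fun _ => kronE_of_neg) hF hE
          hcE (lie_kronE_one_mul_kronLetter_of_barred hb hc),
        fun w hw => lie_of_barred_recursion (kronE_zero j) (fun _ => kronE_of_neg) hF
          (hlie w (by omega)) (commute_lie_kronE_one hc (by omega))
          (kronLetter_mul_lie_of_barred hb (by omega))⟩

/-- For `m ∈ [N-1]`, `x = m+1` (unbarred), and `A_{≤m̄}` the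
letters at most `m̄` in the natural order,
`J_{(a,a)}(m̄ |x| m̄) = x · J_{(a,a)}(m̄, m̄)` in `U/I_Kron`. -/
theorem J_two_column_insert (N : ℕ) (m : Fin N) (hm : (m : ℕ) + 1 < N) (a : ℕ) :
    let x : Letter N := (⟨(m : ℕ) + 1, hm⟩, false)
    let S : Set (Letter N) := {y | natKey y ≤ natKey ((m, true) : Letter N)}
    RingQuot.mkRingHom (kronRel N)
        (eSetZ natKey S (a : ℤ) * wrd [x] * eSetZ natKey S (a : ℤ) -
          eSetZ natKey S ((a : ℤ) + 1) * wrd [x] * eSetZ natKey S ((a : ℤ) - 1)) =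
      RingQuot.mkRingHom (kronRel N)
        (wrd [x] *
          (eSetZ natKey S (a : ℤ) * eSetZ natKey S (a : ℤ) -
            eSetZ natKey S ((a : ℤ) + 1) * eSetZ natKey S ((a : ℤ) - 1))) := by
  intro x S
  have hx : natKey x = 2 * m + 2 := by simp [x, natKey]; ring
  have hS : S = lettersBelow N (2 * m + 2) := by
    ext y
    simp only [S, lettersBelow, natKey, Set.mem_ofPred_eq, if_true]
    omega
  obtain ⟨hE, hlie⟩ := kronE_commute_and_lie (N := N) (2 * m + 2)
  simp only [hS, map_sub, map_mul]
  exact two_column_insert_of_lie_eq (hlie x hx.ge) a (hE _ _)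

end NCS
end
end
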